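/- arXiv:2308.12719 — 5 statements merged into one kernel-verified Lean document; each statement's English description precedes it below -/
import Mathlib

section
/- Let Δ be a Fano simplex of dimension d = 2 and Gorenstein index g = 1. Then Vol(Δ) ≤ 9, and equality holds if and only if Δ is isomorphic to Δ(P) where P is the 2×3 integer matrix with columns (1,0), (1,3), (−2,−3). -/
open Finset Pointwise

/-- Cast an integer vector to a rational vector. -/
def toQ {d : ℕ} (v : Fin d → ℤ) : Fin d → ℚ := fun j => (v j : ℚ)

/-- An integer vector is primitive if the gcd of its entries is 1. -/
def IsPrimitive {d : ℕ} (v : Fin d → ℤ) : Prop := Finset.univ.gcd v = 1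

/-- The origin lies in the interior of the simplex with the given vertices,
i.e. the origin is a convex combination of the vertices with positive coefficients. -/
def OriginInInterior {d : ℕ} (v : Fin (d + 1) → Fin d → ℚ) : Prop :=
  ∃ w : Fin (d + 1) → ℚ, (∀ i, 0 < w i) ∧ ∑ i, w i = 1 ∧ ∀ j, ∑ i, w i * v i j = 0

/-- A Fano simplex, given by its tuple of vertices: the vertices are primitive integer
vectors, affinely independent, and the origin lies in the interior. -/
def IsFanoSimplex {d : ℕ} (v : Fin (d + 1) → Fin d → ℤ) : Prop :=
  AffineIndependent ℚ (fun i => toQ (v i)) ∧ (∀ i, IsPrimitive (v i)) ∧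
    OriginInInterior fun i => toQ (v i)

/-- The simplex spanned by the given vertices. -/
def simplexHull {d : ℕ} (v : Fin (d + 1) → Fin d → ℚ) : Set (Fin d → ℚ) :=
  convexHull ℚ (Set.range v)

/-- The dual body `Δ* = {u : ⟨u,v⟩ ≥ -1 for all v ∈ Δ}`. -/
def dualBody {d : ℕ} (S : Set (Fin d → ℚ)) : Set (Fin d → ℚ) :=
  {u | ∀ x ∈ S, -1 ≤ ∑ j, u j * x j}

/-- A set is a lattice polytope iff it is the convex hull of its integral points
(equivalently, all its vertices are lattice points). -/
def IsLatticeSet {d : ℕ} (S : Set (Fin d → ℚ)) : Prop :=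
  S = convexHull ℚ {x ∈ S | ∀ j, ∃ z : ℤ, x j = (z : ℚ)}

/-- The Gorenstein index: the least positive integer `g` such that `g • Δ*` is a
lattice polytope. -/
noncomputable def gorensteinIndex {d : ℕ} (v : Fin (d + 1) → Fin d → ℚ) : ℕ :=
  sInf {g : ℕ | 0 < g ∧ IsLatticeSet ((g : ℚ) • dualBody (simplexHull v))}

/-- The normalized volume `d! · vol(Δ)` of the simplex with the given vertices. -/
def normVol {d : ℕ} (v : Fin (d + 1) → Fin d → ℚ) : ℚ :=
  |(Matrix.of fun i j : Fin d => v i.succ j - v 0 j).det|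

/-- Two (Fano) simplices, given by their vertex tuples, are isomorphic iff some
unimodular integer matrix maps the vertex set of one onto the vertex set of the other. -/
def IsIsomorphicTo {d : ℕ} (v w : Fin (d + 1) → Fin d → ℤ) : Prop :=
  ∃ (U : Matrix (Fin d) (Fin d) ℤ) (σ : Equiv.Perm (Fin (d + 1))),
    IsUnit U.det ∧ ∀ i, U.mulVec (v i) = w (σ i)

/- ------------------- auxiliary lemmas ------------------- -/

lemma FanoAux.bd (A1 A2 A3 : ℕ) (h1 : 1 ≤ A1) (h2 : 1 ≤ A2) (h3 : 1 ≤ A3)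
    (d13 : A1*A3 ∣ A1+A2+A3) (d23 : A2*A3 ∣ A1+A2+A3) : A3 ≤ 6 := by
  have l13 : A1*A3 ≤ A1+A2+A3 := Nat.le_of_dvd (by omega) d13
  have l23 : A2*A3 ≤ A1+A2+A3 := Nat.le_of_dvd (by omega) d23
  rcases Nat.lt_or_ge (A1+A2) 3 with h | h
  · have hA1 : A1 = 1 := by omega
    have hA2 : A2 = 1 := by omega
    subst hA1 hA2
    have : A3 ∣ 2 := (Nat.dvd_add_right (dvd_refl A3)).mp (by simpa [Nat.add_comm] using d23)
    have := Nat.le_of_dvd (by norm_num) this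
    omega
  · nlinarith

lemma FanoAux.arith (A1 A2 A3 : ℕ) (h1 : 1 ≤ A1) (h2 : 1 ≤ A2) (h3 : 1 ≤ A3)
    (d12 : A1*A2 ∣ A1+A2+A3) (d13 : A1*A3 ∣ A1+A2+A3) (d23 : A2*A3 ∣ A1+A2+A3) :
    A1+A2+A3 ≤ 9 ∧ (A1+A2+A3 = 9 → A1 = 3 ∧ A2 = 3 ∧ A3 = 3) := by
  have b3 : A3 ≤ 6 := FanoAux.bd A1 A2 A3 h1 h2 h3 d13 d23
  have b2 : A2 ≤ 6 := FanoAux.bd A1 A3 A2 h1 h3 h2 (by rwa [show A1+A3+A2 = A1+A2+A3 by omega])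
    (by rw [show A1+A3+A2 = A1+A2+A3 by omega]; rwa [Nat.mul_comm] at d23)
  have b1 : A1 ≤ 6 := FanoAux.bd A2 A3 A1 h2 h3 h1
    (by rw [show A2+A3+A1 = A1+A2+A3 by omega]; rwa [Nat.mul_comm] at d12)
    (by rw [show A2+A3+A1 = A1+A2+A3 by omega]; rwa [Nat.mul_comm] at d13)
  interval_cases A1 <;> interval_cases A2 <;> interval_cases A3 <;> omega

lemma FanoAux.key_integral (T S : Set (Fin 2 → ℚ)) (hST : T ⊆ S) (hS : S = convexHull ℚ T)
    (hTlat : ∀ x ∈ T, ∀ j, ∃ z : ℤ, x j = (z:ℚ))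
    (a b : Fin 2 → ℚ)
    (mina : ∀ x ∈ S, -1 ≤ ∑ j, x j * a j)
    (minb : ∀ x ∈ S, -1 ≤ ∑ j, x j * b j)
    (u : Fin 2 → ℚ) (hu : u ∈ S)
    (hua : ∑ j, u j * a j = -1) (hub : ∑ j, u j * b j = -1)
    (huniq : ∀ x ∈ S, (∑ j, x j * a j = -1) → (∑ j, x j * b j = -1) → x = u) :
    ∀ j, ∃ z : ℤ, u j = (z:ℚ) := by
  by_contra hnot
  push_neg at hnot
  have hlin : IsLinearMap ℚ (fun x : Fin 2 → ℚ => ∑ j, x j * (a j + b j)) := by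
    constructor
    · intro x y; simp [Pi.add_apply, add_mul, Finset.sum_add_distrib]
    · intro c x
      simp only [Pi.smul_apply, smul_eq_mul, Finset.mul_sum]
      congr 1; funext j; ring
  have hH : Convex ℚ {x : Fin 2 → ℚ | -2 < ∑ j, x j * (a j + b j)} :=
    convex_halfSpace_gt hlin (-2)
  have hTH : T ⊆ {x : Fin 2 → ℚ | -2 < ∑ j, x j * (a j + b j)} := by
    intro x hx
    have hxS : x ∈ S := hST hx
    have h1 : -1 ≤ ∑ j, x j * a j := mina x hxS
    have h2 : -1 ≤ ∑ j, x j * b j := minb x hxS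
    have hsplit : ∑ j, x j * (a j + b j) = (∑ j, x j * a j) + (∑ j, x j * b j) := by
      simp [mul_add, Finset.sum_add_distrib]
    rcases lt_or_eq_of_le h1 with h1' | h1'
    · simp only [Set.mem_setOf_eq, hsplit]; linarith
    rcases lt_or_eq_of_le h2 with h2' | h2'
    · simp only [Set.mem_setOf_eq, hsplit]; linarith
    · exfalso
      have hxu : x = u := huniq x hxS h1'.symm h2'.symm
      obtain ⟨j, hj⟩ := hnot
      obtain ⟨z, hz⟩ := hTlat x hx j
      exact hj z (by rw [← hxu]; exact hz)
  have hmem : u ∈ {x : Fin 2 → ℚ | -2 < ∑ j, x j * (a j + b j)} := by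
    rw [hS] at hu
    exact convexHull_min hTH hH hu
  simp only [Set.mem_setOf_eq] at hmem
  have : (-2:ℚ) < -2 := by
    have hsplit : ∑ j, u j * (a j + b j) = (∑ j, u j * a j) + (∑ j, u j * b j) := by
      simp [mul_add, Finset.sum_add_distrib]
    rw [hsplit, hua, hub] at hmem; linarith
  exact absurd this (lt_irrefl _)

lemma FanoAux.mem_dualBody {d : ℕ} (v : Fin (d+1) → Fin d → ℚ) (u : Fin d → ℚ) :
    u ∈ dualBody (simplexHull v) ↔ ∀ i, -1 ≤ ∑ j, u j * v i j := by
  constructor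
  · intro h i
    exact h (v i) (subset_convexHull ℚ _ (Set.mem_range_self i))
  · intro h x hx
    have hlin : IsLinearMap ℚ (fun x : Fin d → ℚ => ∑ j, u j * x j) := by
      constructor
      · intro x y; simp [Pi.add_apply, mul_add, Finset.sum_add_distrib]
      · intro c x
        simp only [Pi.smul_apply, smul_eq_mul, Finset.mul_sum]
        congr 1; funext j; ring
    have hC : Convex ℚ {x : Fin d → ℚ | -1 ≤ ∑ j, u j * x j} := convex_halfSpace_ge hlin (-1)
    have hsub : Set.range v ⊆ {x : Fin d → ℚ | -1 ≤ ∑ j, u j * x j} := by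
      rintro _ ⟨i, rfl⟩; exact h i
    exact convexHull_min hsub hC hx

lemma FanoAux.edge_integral (T S : Set (Fin 2 → ℚ)) (hST : T ⊆ S) (hS : S = convexHull ℚ T)
    (hTlat : ∀ x ∈ T, ∀ j, ∃ z : ℤ, x j = (z:ℚ))
    (x y z : Fin 2 → ℤ) (w0 w1 w2 : ℚ) (hw2 : 0 < w2) (hw01 : 0 < w0 + w1)
    (hE : ∀ j, w0 * (x j : ℚ) + w1 * (y j : ℚ) + w2 * (z j : ℚ) = 0)
    (hmem : ∀ u : Fin 2 → ℚ, u ∈ S ↔ ((-1 ≤ ∑ j, u j * (x j:ℚ)) ∧ (-1 ≤ ∑ j, u j * (y j:ℚ))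
        ∧ (-1 ≤ ∑ j, u j * (z j:ℚ))))
    (D : ℤ) (hDdef : D = x 0 * y 1 - x 1 * y 0) (hD : D ≠ 0) :
    ∃ p1 p2 : ℤ, x 1 - y 1 = D * p1 ∧ y 0 - x 0 = D * p2 := by
  have hDQ : (D:ℚ) ≠ 0 := Int.cast_ne_zero.mpr hD
  have hDc : (D:ℚ) = (x 0:ℚ) * (y 1:ℚ) - (x 1:ℚ) * (y 0:ℚ) := by
    exact_mod_cast congrArg (fun n : ℤ => (n:ℚ)) hDdef
  set u : Fin 2 → ℚ := ![((x 1:ℚ) - (y 1:ℚ))/(D:ℚ), ((y 0:ℚ) - (x 0:ℚ))/(D:ℚ)] with hu_def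
  have hu0 : u 0 = ((x 1:ℚ) - (y 1:ℚ))/(D:ℚ) := rfl
  have hu1 : u 1 = ((y 0:ℚ) - (x 0:ℚ))/(D:ℚ) := rfl
  have hua : ∑ j, u j * (x j:ℚ) = -1 := by
    rw [Fin.sum_univ_two, hu0, hu1]
    field_simp
    linear_combination hDc
  have hub : ∑ j, u j * (y j:ℚ) = -1 := by
    rw [Fin.sum_univ_two, hu0, hu1]
    field_simp
    linear_combination hDc
  have huz : (0:ℚ) < ∑ j, u j * (z j:ℚ) := by
    have h0 := hE 0
    have h1 := hE 1
    rw [Fin.sum_univ_two] at hua hub ⊢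
    have key : w2 * (u 0 * (z 0:ℚ) + u 1 * (z 1:ℚ)) = w0 + w1 := by
      linear_combination (u 0) * h0 + (u 1) * h1 - w0 * hua - w1 * hub
    nlinarith [key]
  have huS : u ∈ S := (hmem u).mpr ⟨le_of_eq hua.symm, le_of_eq hub.symm, by linarith⟩
  have huniq : ∀ q ∈ S, (∑ j, q j * (x j:ℚ) = -1) → (∑ j, q j * (y j:ℚ) = -1) → q = u := by
    intro q _ hqa hqb
    rw [Fin.sum_univ_two] at hqa hqb
    have e1 : (q 0 - u 0) * (x 0:ℚ) + (q 1 - u 1) * (x 1:ℚ) = 0 := by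
      rw [Fin.sum_univ_two] at hua; linear_combination hqa - hua
    have e2 : (q 0 - u 0) * (y 0:ℚ) + (q 1 - u 1) * (y 1:ℚ) = 0 := by
      rw [Fin.sum_univ_two] at hub; linear_combination hqb - hub
    have e3 : (q 0 - u 0) * (D:ℚ) = 0 := by
      linear_combination (y 1:ℚ) * e1 - (x 1:ℚ) * e2 + (q 0 - u 0) * hDc
    have e4 : (q 1 - u 1) * (D:ℚ) = 0 := by
      linear_combination (x 0:ℚ) * e2 - (y 0:ℚ) * e1 + (q 1 - u 1) * hDc
    have hq0 : q 0 = u 0 := by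
      rcases mul_eq_zero.mp e3 with h | h
      · linarith
      · exact absurd h hDQ
    have hq1 : q 1 = u 1 := by
      rcases mul_eq_zero.mp e4 with h | h
      · linarith
      · exact absurd h hDQ
    funext j; fin_cases j <;> assumption
  have hint := FanoAux.key_integral T S hST hS hTlat (fun j => (x j : ℚ)) (fun j => (y j : ℚ))
    (fun q hq => ((hmem q).mp hq).1) (fun q hq => ((hmem q).mp hq).2.1)
    u huS hua hub huniq
  obtain ⟨p1, hp1⟩ := hint 0
  obtain ⟨p2, hp2⟩ := hint 1
  rw [hu0] at hp1; rw [hu1] at hp2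
  refine ⟨p1, p2, ?_, ?_⟩
  · have : (x 1:ℚ) - (y 1:ℚ) = (D:ℚ) * p1 := by
      field_simp at hp1; linarith [hp1]
    exact_mod_cast this
  · have : (y 0:ℚ) - (x 0:ℚ) = (D:ℚ) * p2 := by
      field_simp at hp2; linarith [hp2]
    exact_mod_cast this

lemma FanoAux.mulVec_det (U : Matrix (Fin 2) (Fin 2) ℤ) (x y : Fin 2 → ℤ) :
    (U.mulVec x 0 * U.mulVec y 1 - U.mulVec x 1 * U.mulVec y 0)
      = U.det * (x 0 * y 1 - x 1 * y 0) := by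
  simp [Matrix.mulVec, dotProduct, Fin.sum_univ_two, Matrix.det_fin_two]
  ring

lemma FanoAux.mulVec_pair (U : Matrix (Fin 2) (Fin 2) ℤ) (x : Fin 2 → ℤ) (a b : ℤ)
    (h0 : U 0 0 * x 0 + U 0 1 * x 1 = a) (h1 : U 1 0 * x 0 + U 1 1 * x 1 = b) :
    U.mulVec x = ![a, b] := by
  funext j
  fin_cases j <;> simp [Matrix.mulVec, dotProduct, Fin.sum_univ_two] <;> linarith

lemma FanoAux.w_perm : ∀ i j k : Fin 3, i ≠ j → j ≠ k → i ≠ k →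
    ((![![1, 0], ![1, 3], ![-2, -3]] : Fin 3 → Fin 2 → ℤ) i 0
        * (![![1, 0], ![1, 3], ![-2, -3]] : Fin 3 → Fin 2 → ℤ) j 1
      - (![![1, 0], ![1, 3], ![-2, -3]] : Fin 3 → Fin 2 → ℤ) i 1
        * (![![1, 0], ![1, 3], ![-2, -3]] : Fin 3 → Fin 2 → ℤ) j 0)
    + ((![![1, 0], ![1, 3], ![-2, -3]] : Fin 3 → Fin 2 → ℤ) j 0
        * (![![1, 0], ![1, 3], ![-2, -3]] : Fin 3 → Fin 2 → ℤ) k 1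
      - (![![1, 0], ![1, 3], ![-2, -3]] : Fin 3 → Fin 2 → ℤ) j 1
        * (![![1, 0], ![1, 3], ![-2, -3]] : Fin 3 → Fin 2 → ℤ) k 0)
    + ((![![1, 0], ![1, 3], ![-2, -3]] : Fin 3 → Fin 2 → ℤ) k 0
        * (![![1, 0], ![1, 3], ![-2, -3]] : Fin 3 → Fin 2 → ℤ) i 1
      - (![![1, 0], ![1, 3], ![-2, -3]] : Fin 3 → Fin 2 → ℤ) k 1
        * (![![1, 0], ![1, 3], ![-2, -3]] : Fin 3 → Fin 2 → ℤ) i 0) = 9 ∨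
    ((![![1, 0], ![1, 3], ![-2, -3]] : Fin 3 → Fin 2 → ℤ) i 0
        * (![![1, 0], ![1, 3], ![-2, -3]] : Fin 3 → Fin 2 → ℤ) j 1
      - (![![1, 0], ![1, 3], ![-2, -3]] : Fin 3 → Fin 2 → ℤ) i 1
        * (![![1, 0], ![1, 3], ![-2, -3]] : Fin 3 → Fin 2 → ℤ) j 0)
    + ((![![1, 0], ![1, 3], ![-2, -3]] : Fin 3 → Fin 2 → ℤ) j 0
        * (![![1, 0], ![1, 3], ![-2, -3]] : Fin 3 → Fin 2 → ℤ) k 1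
      - (![![1, 0], ![1, 3], ![-2, -3]] : Fin 3 → Fin 2 → ℤ) j 1
        * (![![1, 0], ![1, 3], ![-2, -3]] : Fin 3 → Fin 2 → ℤ) k 0)
    + ((![![1, 0], ![1, 3], ![-2, -3]] : Fin 3 → Fin 2 → ℤ) k 0
        * (![![1, 0], ![1, 3], ![-2, -3]] : Fin 3 → Fin 2 → ℤ) i 1
      - (![![1, 0], ![1, 3], ![-2, -3]] : Fin 3 → Fin 2 → ℤ) k 1
        * (![![1, 0], ![1, 3], ![-2, -3]] : Fin 3 → Fin 2 → ℤ) i 0) = -9 := by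
  decide

set_option maxHeartbeats 1000000 in
/-- A Fano simplex of dimension 2 and Gorenstein index 1 has
normalized volume at most 9, with equality iff it is isomorphic to the simplex
with vertex matrix having columns (1,0), (1,3), (-2,-3). -/
theorem volume_bound_dim2_gorenstein1
    (v : Fin 3 → Fin 2 → ℤ)
    (hFano : IsFanoSimplex v)
    (hGor : gorensteinIndex (fun i => toQ (v i)) = 1) :
    normVol (fun i => toQ (v i)) ≤ 9 ∧
      (normVol (fun i => toQ (v i)) = 9 ↔
        IsIsomorphicTo v ![![1, 0], ![1, 3], ![-2, -3]]) := by
  obtain ⟨hAff, hPrim, hOr⟩ := hFano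
  obtain ⟨w, hwpos, hwsum, hwzero⟩ := hOr
  have E : ∀ j : Fin 2, w 0 * ((v 0 j : ℚ)) + w 1 * (v 1 j : ℚ) + w 2 * (v 2 j : ℚ) = 0 := by
    intro j
    have h := hwzero j
    rw [Fin.sum_univ_three] at h
    simpa [toQ] using h
  have hsum3 : w 0 + w 1 + w 2 = 1 := by
    have h := hwsum; rwa [Fin.sum_univ_three] at h
  obtain ⟨D1, hD1def⟩ : ∃ D : ℤ, D = v 0 0 * v 1 1 - v 0 1 * v 1 0 := ⟨_, rfl⟩
  obtain ⟨D2, hD2def⟩ : ∃ D : ℤ, D = v 1 0 * v 2 1 - v 1 1 * v 2 0 := ⟨_, rfl⟩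
  obtain ⟨D3, hD3def⟩ : ∃ D : ℤ, D = v 2 0 * v 0 1 - v 2 1 * v 0 0 := ⟨_, rfl⟩
  obtain ⟨V, hVdef⟩ : ∃ V : ℤ, V = D1 + D2 + D3 := ⟨_, rfl⟩
  have hD1Q : (D1:ℚ) = (v 0 0:ℚ) * (v 1 1:ℚ) - (v 0 1:ℚ) * (v 1 0:ℚ) := by
    rw [hD1def]; push_cast; ring
  have hD2Q : (D2:ℚ) = (v 1 0:ℚ) * (v 2 1:ℚ) - (v 1 1:ℚ) * (v 2 0:ℚ) := by
    rw [hD2def]; push_cast; ring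
  have hD3Q : (D3:ℚ) = (v 2 0:ℚ) * (v 0 1:ℚ) - (v 2 1:ℚ) * (v 0 0:ℚ) := by
    rw [hD3def]; push_cast; ring
  have hVQ : (V:ℚ) = (D1:ℚ) + (D2:ℚ) + (D3:ℚ) := by rw [hVdef]; push_cast; ring
  -- pairwise weight identities
  have p12 : w 1 * (D2:ℚ) = w 0 * (D3:ℚ) := by
    linear_combination (v 2 1:ℚ) * E 0 - (v 2 0:ℚ) * E 1 + w 1 * hD2Q - w 0 * hD3Q
  have p2 : w 0 * (D1:ℚ) = w 2 * (D2:ℚ) := by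
    linear_combination (v 1 1:ℚ) * E 0 - (v 1 0:ℚ) * E 1 + w 0 * hD1Q - w 2 * hD2Q
  have p3 : w 1 * (D1:ℚ) = w 2 * (D3:ℚ) := by
    linear_combination (v 0 0:ℚ) * E 1 - (v 0 1:ℚ) * E 0 + w 1 * hD1Q - w 2 * hD3Q
  have hDw1 : (D1:ℚ) = w 2 * (V:ℚ) := by
    linear_combination (-(D1:ℚ)) * hsum3 + p2 + p3 - w 2 * hVQ
  have hDw2 : (D2:ℚ) = w 0 * (V:ℚ) := by
    linear_combination (-(D2:ℚ)) * hsum3 - p2 + p12 - w 0 * hVQ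
  have hDw3 : (D3:ℚ) = w 1 * (V:ℚ) := by
    linear_combination (-(D3:ℚ)) * hsum3 - p3 - p12 - w 1 * hVQ
  -- V ≠ 0
  have hVne : V ≠ 0 := by
    intro hV0
    have hVQ0 : (V:ℚ) = 0 := by exact_mod_cast congrArg (fun n : ℤ => (n:ℚ)) hV0
    have hd1 : (D1:ℚ) = 0 := by rw [hDw1, hVQ0, mul_zero]
    have hd3 : (D3:ℚ) = 0 := by rw [hDw3, hVQ0, mul_zero]
    have hd1' : (v 0 0:ℚ) * (v 1 1:ℚ) - (v 0 1:ℚ) * (v 1 0:ℚ) = 0 := by rw [← hD1Q]; exact hd1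
    have hd3' : (v 2 0:ℚ) * (v 0 1:ℚ) - (v 2 1:ℚ) * (v 0 0:ℚ) = 0 := by rw [← hD3Q]; exact hd3
    -- v 0 is nonzero
    have haz : ¬(v 0 0 = 0 ∧ v 0 1 = 0) := by
      rintro ⟨h1, h2⟩
      have hg : Finset.univ.gcd (v 0) = 0 := by
        rw [Finset.gcd_eq_zero_iff]
        intro i _
        fin_cases i <;> assumption
      have := hPrim 0
      rw [IsPrimitive, hg] at this
      exact absurd this (by norm_num)
    have hsq : ∀ q : ℚ, q ≠ 0 → 0 < q ^ 2 := fun q hq => by positivity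
    have hN : 0 < (v 0 0:ℚ)^2 + (v 0 1:ℚ)^2 := by
      rcases not_and_or.mp haz with h | h
      · have : (v 0 0:ℚ) ≠ 0 := by exact_mod_cast h
        nlinarith [hsq _ this, sq_nonneg ((v 0 1:ℚ))]
      · have : (v 0 1:ℚ) ≠ 0 := by exact_mod_cast h
        nlinarith [hsq _ this, sq_nonneg ((v 0 0:ℚ))]
    set N : ℚ := (v 0 0:ℚ)^2 + (v 0 1:ℚ)^2 with hNdef
    have hNne : N ≠ 0 := ne_of_gt hN
    set β : ℚ := ((v 0 0:ℚ) * (v 1 0:ℚ) + (v 0 1:ℚ) * (v 1 1:ℚ)) / N with hβdef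
    set γ : ℚ := ((v 0 0:ℚ) * (v 2 0:ℚ) + (v 0 1:ℚ) * (v 2 1:ℚ)) / N with hγdef
    have hb : ∀ j, (v 1 j:ℚ) = β * (v 0 j:ℚ) := by
      intro j
      rw [hβdef]
      fin_cases j
      all_goals simp only [Fin.zero_eta, Fin.mk_one]
      · field_simp
        linear_combination (-(v 0 1:ℚ)) * hd1'
      · field_simp
        linear_combination (v 0 0:ℚ) * hd1'
    have hc : ∀ j, (v 2 j:ℚ) = γ * (v 0 j:ℚ) := by
      intro j
      rw [hγdef]
      fin_cases j
      all_goals simp only [Fin.zero_eta, Fin.mk_one]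
      · field_simp
        linear_combination (v 0 1:ℚ) * hd3'
      · field_simp
        linear_combination (-(v 0 0:ℚ)) * hd3'
    have hzero := affineIndependent_iff.mp hAff Finset.univ ![β - γ, γ - 1, 1 - β]
      (by rw [Fin.sum_univ_three]; show (β - γ) + (γ - 1) + (1 - β) = 0; ring)
      (by
        rw [Fin.sum_univ_three]
        funext j
        simp only [Pi.add_apply, Pi.smul_apply, Pi.zero_apply, smul_eq_mul,
          Matrix.cons_val_zero, Matrix.cons_val_one, Matrix.head_cons]
        show (β - γ) * toQ (v 0) j + (γ - 1) * toQ (v 1) j + (1 - β) * toQ (v 2) j = 0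
        simp only [toQ]
        rw [hb j, hc j]
        ring)
    have hγ1 : γ = 1 := by
      have := hzero 1 (Finset.mem_univ 1)
      simp at this
      linarith
    have hβ1 : β = 1 := by
      have := hzero 2 (Finset.mem_univ 2)
      simp at this
      linarith
    have hv10 : (fun i => toQ (v i)) 1 = (fun i => toQ (v i)) 0 := by
      funext j
      show toQ (v 1) j = toQ (v 0) j
      simp only [toQ]
      rw [hb j, hβ1, one_mul]
    have := hAff.injective hv10
    exact absurd this (by decide)
  have hVQne : (V:ℚ) ≠ 0 := Int.cast_ne_zero.mpr hVne
  -- all D nonzero, signs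
  have hD1ne : D1 ≠ 0 := by
    intro h
    rw [h] at hDw1
    simp at hDw1
    rcases hDw1 with h' | h'
    · exact absurd h' (ne_of_gt (hwpos 2))
    · exact hVne h'
  have hD2ne : D2 ≠ 0 := by
    intro h
    rw [h] at hDw2
    simp at hDw2
    rcases hDw2 with h' | h'
    · exact absurd h' (ne_of_gt (hwpos 0))
    · exact hVne h'
  have hD3ne : D3 ≠ 0 := by
    intro h
    rw [h] at hDw3
    simp at hDw3
    rcases hDw3 with h' | h'
    · exact absurd h' (ne_of_gt (hwpos 1))
    · exact hVne h'
  have hsign : (0 < D1 ∧ 0 < D2 ∧ 0 < D3 ∧ 0 < V) ∨ (D1 < 0 ∧ D2 < 0 ∧ D3 < 0 ∧ V < 0) := by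
    rcases lt_or_gt_of_ne hVne with hV | hV
    · right
      have hVQ' : (V:ℚ) < 0 := by exact_mod_cast hV
      have h1 : (D1:ℚ) < 0 := by rw [hDw1]; exact mul_neg_of_pos_of_neg (hwpos 2) hVQ'
      have h2 : (D2:ℚ) < 0 := by rw [hDw2]; exact mul_neg_of_pos_of_neg (hwpos 0) hVQ'
      have h3 : (D3:ℚ) < 0 := by rw [hDw3]; exact mul_neg_of_pos_of_neg (hwpos 1) hVQ'
      exact ⟨by exact_mod_cast h1, by exact_mod_cast h2, by exact_mod_cast h3, hV⟩
    · left
      have hVQ' : (0:ℚ) < V := by exact_mod_cast hV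
      have h1 : (0:ℚ) < D1 := by rw [hDw1]; exact mul_pos (hwpos 2) hVQ'
      have h2 : (0:ℚ) < D2 := by rw [hDw2]; exact mul_pos (hwpos 0) hVQ'
      have h3 : (0:ℚ) < D3 := by rw [hDw3]; exact mul_pos (hwpos 1) hVQ'
      exact ⟨by exact_mod_cast h1, by exact_mod_cast h2, by exact_mod_cast h3, hV⟩
  -- the dual body is a lattice set
  set SS : Set (Fin 2 → ℚ) := dualBody (simplexHull (fun i => toQ (v i))) with hSSdef
  have hne : {g : ℕ | 0 < g ∧ IsLatticeSet ((g : ℚ) • SS)}.Nonempty := by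
    by_contra h
    rw [Set.not_nonempty_iff_eq_empty] at h
    rw [gorensteinIndex, ← hSSdef, h, Nat.sInf_empty] at hGor
    exact absurd hGor (by norm_num)
  have h1mem : (1:ℕ) ∈ {g : ℕ | 0 < g ∧ IsLatticeSet ((g : ℚ) • SS)} := by
    have h := Nat.sInf_mem hne
    rw [show sInf {g : ℕ | 0 < g ∧ IsLatticeSet ((g : ℚ) • SS)}
        = gorensteinIndex (fun i => toQ (v i)) from by rw [gorensteinIndex, hSSdef], hGor] at h
    exact h
  have hLat : IsLatticeSet SS := by
    have h := h1mem.2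
    rwa [Nat.cast_one, one_smul] at h
  set TT : Set (Fin 2 → ℚ) := {x ∈ SS | ∀ j, ∃ z : ℤ, x j = (z:ℚ)} with hTTdef
  have hS : SS = convexHull ℚ TT := hLat
  have hST : TT ⊆ SS := fun x hx => hx.1
  have hTlat : ∀ x ∈ TT, ∀ j, ∃ z : ℤ, x j = (z:ℚ) := fun x hx => hx.2
  have hmem3 : ∀ u : Fin 2 → ℚ, u ∈ SS ↔ ((-1 ≤ ∑ j, u j * (v 0 j:ℚ)) ∧
      (-1 ≤ ∑ j, u j * (v 1 j:ℚ)) ∧ (-1 ≤ ∑ j, u j * (v 2 j:ℚ))) := by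
    intro u
    rw [hSSdef, FanoAux.mem_dualBody]
    constructor
    · intro h
      exact ⟨h 0, h 1, h 2⟩
    · rintro ⟨h0, h1, h2⟩ i
      fin_cases i <;> assumption
  -- edge integrality
  obtain ⟨p1, p2, hp1, hp2⟩ := FanoAux.edge_integral TT SS hST hS hTlat (v 0) (v 1) (v 2)
    (w 0) (w 1) (w 2) (hwpos 2) (by have := hwpos 0; have := hwpos 1; linarith)
    E (fun u => hmem3 u) D1 hD1def hD1ne
  obtain ⟨r1, r2, hr1, hr2⟩ := FanoAux.edge_integral TT SS hST hS hTlat (v 1) (v 2) (v 0)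
    (w 1) (w 2) (w 0) (hwpos 0) (by have := hwpos 1; have := hwpos 2; linarith)
    (fun j => by linear_combination E j)
    (fun u => by rw [hmem3 u]; tauto) D2 hD2def hD2ne
  obtain ⟨t1, t2, ht1, ht2⟩ := FanoAux.edge_integral TT SS hST hS hTlat (v 2) (v 0) (v 1)
    (w 2) (w 0) (w 1) (hwpos 1) (by have := hwpos 2; have := hwpos 0; linarith)
    (fun j => by linear_combination E j)
    (fun u => by rw [hmem3 u]; tauto) D3 hD3def hD3ne
  -- divisibility of V by products
  have hdvd12 : D1 * D2 ∣ V := ⟨p1 * r2 - p2 * r1, by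
    linear_combination hVdef + hD1def + hD2def + hD3def + (D2*r2) * hp1
      + ((v 0 1) - (v 1 1)) * hr2 - (D2*r1) * hp2 - ((v 1 0) - (v 0 0)) * hr1⟩
  have hdvd23 : D2 * D3 ∣ V := ⟨r1 * t2 - r2 * t1, by
    linear_combination hVdef + hD1def + hD2def + hD3def + (D3*t2) * hr1
      + ((v 1 1) - (v 2 1)) * ht2 - (D3*t1) * hr2 - ((v 2 0) - (v 1 0)) * ht1⟩
  have hdvd31 : D3 * D1 ∣ V := ⟨t1 * p2 - t2 * p1, by
    linear_combination hVdef + hD1def + hD2def + hD3def + (D1*p2) * ht1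
      + ((v 2 1) - (v 0 1)) * hp2 - (D1*p1) * ht2 - ((v 0 0) - (v 2 0)) * hp1⟩
  -- natAbs bookkeeping
  have hA : V.natAbs = D1.natAbs + D2.natAbs + D3.natAbs := by
    rcases hsign with ⟨h1, h2, h3, h4⟩ | ⟨h1, h2, h3, h4⟩ <;> omega
  have hd12 : D1.natAbs * D2.natAbs ∣ V.natAbs := by
    rw [← Int.natAbs_mul]; exact Int.natAbs_dvd_natAbs.mpr hdvd12
  have hd23 : D2.natAbs * D3.natAbs ∣ V.natAbs := by
    rw [← Int.natAbs_mul]; exact Int.natAbs_dvd_natAbs.mpr hdvd23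
  have hd13 : D1.natAbs * D3.natAbs ∣ V.natAbs := by
    rw [← Int.natAbs_mul, Int.natAbs_mul, Nat.mul_comm, ← Int.natAbs_mul]
    exact Int.natAbs_dvd_natAbs.mpr hdvd31
  have harith := FanoAux.arith D1.natAbs D2.natAbs D3.natAbs
    (by omega) (by omega) (by omega)
    (by rw [← hA]; exact hd12) (by rw [← hA]; exact hd13) (by rw [← hA]; exact hd23)
  -- normVol computation
  have hnv : normVol (fun i => toQ (v i)) = |(V:ℚ)| := by
    have hdet : (Matrix.of fun i j : Fin 2 =>
        (fun i => toQ (v i)) i.succ j - (fun i => toQ (v i)) 0 j).det = (V:ℚ) := by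
      rw [Matrix.det_fin_two]
      simp only [Matrix.of_apply, toQ, Fin.succ_zero_eq_one, Fin.succ_one_eq_two]
      rw [hVQ, hD1Q, hD2Q, hD3Q]
      ring
    rw [normVol, hdet]
  have hbound : V.natAbs ≤ 9 := by rw [hA]; exact harith.1
  constructor
  · rw [hnv, ← Int.cast_abs]
    have : |V| ≤ 9 := by rw [Int.abs_eq_natAbs]; omega
    exact_mod_cast this
  constructor
  · -- equality implies isomorphism
    intro h9
    have h9' : |V| = 9 := by
      rw [hnv, ← Int.cast_abs] at h9
      exact_mod_cast h9
    have h9n : V.natAbs = 9 := by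
      have := congrArg Int.natAbs h9'
      simpa [Int.natAbs_abs] using this
    obtain ⟨hA1, hA2, hA3⟩ := harith.2 (by omega)
    rcases hsign with ⟨hs1, hs2, hs3, hsV⟩ | ⟨hs1, hs2, hs3, hsV⟩
    · -- positive case: D1 = D2 = D3 = 3
      have e1 : D1 = 3 := by omega
      have e2 : D2 = 3 := by omega
      have e3 : D3 = 3 := by omega
      set U : Matrix (Fin 2) (Fin 2) ℤ := !![-p1, -p2; -(v 0 1), v 0 0] with hU
      have hU00 : U 0 0 = -p1 := rfl
      have hU01 : U 0 1 = -p2 := rfl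
      have hU10 : U 1 0 = -(v 0 1) := rfl
      have hU11 : U 1 1 = v 0 0 := rfl
      have m0 : U.mulVec (v 0) = ![1, 0] := by
        refine FanoAux.mulVec_pair U (v 0) 1 0 ?_ ?_
        · rw [hU00, hU01]
          have h3 : (3:ℤ) * ((-p1) * v 0 0 + (-p2) * v 0 1) = 3 * 1 := by
            linear_combination (v 0 0) * hp1 + (p1 * (v 0 0)) * e1 + (v 0 1) * hp2
              + (p2 * (v 0 1)) * e1 + e1 - hD1def
          exact mul_left_cancel₀ (by norm_num) h3
        · rw [hU10, hU11]; ring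
      have m1 : U.mulVec (v 1) = ![1, 3] := by
        refine FanoAux.mulVec_pair U (v 1) 1 3 ?_ ?_
        · rw [hU00, hU01]
          have h3 : (3:ℤ) * ((-p1) * v 1 0 + (-p2) * v 1 1) = 3 * 1 := by
            linear_combination (v 1 0) * hp1 + (p1 * (v 1 0)) * e1 + (v 1 1) * hp2
              + (p2 * (v 1 1)) * e1 + e1 - hD1def
          exact mul_left_cancel₀ (by norm_num) h3
        · rw [hU10, hU11]; linear_combination e1 - hD1def
      have m2 : U.mulVec (v 2) = ![-2, -3] := by
        refine FanoAux.mulVec_pair U (v 2) (-2) (-3) ?_ ?_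
        · rw [hU00, hU01]
          have h3 : (3:ℤ) * ((-p1) * v 2 0 + (-p2) * v 2 1) = 3 * (-2) := by
            linear_combination (v 2 0) * hp1 + (p1 * (v 2 0)) * e1 + (v 2 1) * hp2
              + (p2 * (v 2 1)) * e1 - e2 + hD2def - e3 + hD3def
          exact mul_left_cancel₀ (by norm_num) h3
        · rw [hU10, hU11]; linear_combination hD3def - e3
      have hUdet : U.det = 1 := by
        rw [Matrix.det_fin_two, hU00, hU01, hU10, hU11]
        have h3 : (3:ℤ) * ((-p1) * v 0 0 - (-p2) * (-(v 0 1))) = 3 * 1 := by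
          linear_combination (v 0 0) * hp1 + (p1 * (v 0 0)) * e1 + (v 0 1) * hp2
            + (p2 * (v 0 1)) * e1 + e1 - hD1def
        exact mul_left_cancel₀ (by norm_num) h3
      refine ⟨U, Equiv.refl _, by rw [hUdet]; exact isUnit_one, ?_⟩
      intro i
      fin_cases i
      · exact m0
      · exact m1
      · exact m2
    · -- negative case: D1 = D2 = D3 = -3
      have e1 : D1 = -3 := by omega
      have e2 : D2 = -3 := by omega
      have e3 : D3 = -3 := by omega
      set U : Matrix (Fin 2) (Fin 2) ℤ := !![-t1, -t2; -(v 0 1), v 0 0] with hU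
      have hU00 : U 0 0 = -t1 := rfl
      have hU01 : U 0 1 = -t2 := rfl
      have hU10 : U 1 0 = -(v 0 1) := rfl
      have hU11 : U 1 1 = v 0 0 := rfl
      have m0 : U.mulVec (v 0) = ![1, 0] := by
        refine FanoAux.mulVec_pair U (v 0) 1 0 ?_ ?_
        · rw [hU00, hU01]
          have h3 : (3:ℤ) * ((-t1) * v 0 0 + (-t2) * v 0 1) = 3 * 1 := by
            linear_combination (-(v 0 0)) * ht1 - (t1 * (v 0 0)) * e3 - (v 0 1) * ht2
              - (t2 * (v 0 1)) * e3 - e3 + hD3def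
          exact mul_left_cancel₀ (by norm_num) h3
        · rw [hU10, hU11]; ring
      have m1 : U.mulVec (v 1) = ![-2, -3] := by
        refine FanoAux.mulVec_pair U (v 1) (-2) (-3) ?_ ?_
        · rw [hU00, hU01]
          have h3 : (3:ℤ) * ((-t1) * v 1 0 + (-t2) * v 1 1) = 3 * (-2) := by
            linear_combination (-(v 1 0)) * ht1 - (t1 * (v 1 0)) * e3 - (v 1 1) * ht2
              - (t2 * (v 1 1)) * e3 + e1 - hD1def + e2 - hD2def
          exact mul_left_cancel₀ (by norm_num) h3
        · rw [hU10, hU11]; linear_combination e1 - hD1def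
      have m2 : U.mulVec (v 2) = ![1, 3] := by
        refine FanoAux.mulVec_pair U (v 2) 1 3 ?_ ?_
        · rw [hU00, hU01]
          have h3 : (3:ℤ) * ((-t1) * v 2 0 + (-t2) * v 2 1) = 3 * 1 := by
            linear_combination (-(v 2 0)) * ht1 - (t1 * (v 2 0)) * e3 - (v 2 1) * ht2
              - (t2 * (v 2 1)) * e3 - e3 + hD3def
          exact mul_left_cancel₀ (by norm_num) h3
        · rw [hU10, hU11]; linear_combination hD3def - e3
      have hUdet : U.det = 1 := by
        rw [Matrix.det_fin_two, hU00, hU01, hU10, hU11]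
        have h3 : (3:ℤ) * ((-t1) * v 0 0 - (-t2) * (-(v 0 1))) = 3 * 1 := by
          linear_combination (-(v 0 0)) * ht1 - (t1 * (v 0 0)) * e3 - (v 0 1) * ht2
            - (t2 * (v 0 1)) * e3 - e3 + hD3def
        exact mul_left_cancel₀ (by norm_num) h3
      refine ⟨U, Equiv.swap 1 2, by rw [hUdet]; exact isUnit_one, ?_⟩
      intro i
      fin_cases i
      · exact m0
      · exact m1
      · exact m2
  · -- isomorphism implies equality
    rintro ⟨U, σ, hdet, hmap⟩
    have key : ∀ i j : Fin 3,
        ((![![1, 0], ![1, 3], ![-2, -3]] : Fin 3 → Fin 2 → ℤ) (σ i) 0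
          * (![![1, 0], ![1, 3], ![-2, -3]] : Fin 3 → Fin 2 → ℤ) (σ j) 1
        - (![![1, 0], ![1, 3], ![-2, -3]] : Fin 3 → Fin 2 → ℤ) (σ i) 1
          * (![![1, 0], ![1, 3], ![-2, -3]] : Fin 3 → Fin 2 → ℤ) (σ j) 0)
        = U.det * (v i 0 * v j 1 - v i 1 * v j 0) := by
      intro i j
      rw [← hmap i, ← hmap j]
      exact FanoAux.mulVec_det U (v i) (v j)
    have hsum := FanoAux.w_perm (σ 0) (σ 1) (σ 2)
      (σ.injective.ne (by decide)) (σ.injective.ne (by decide)) (σ.injective.ne (by decide))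
    rw [key 0 1, key 1 2, key 2 0] at hsum
    rw [← hD1def, ← hD2def, ← hD3def] at hsum
    have hdet' := Int.isUnit_iff.mp hdet
    have hV9 : V = 9 ∨ V = -9 := by
      rcases hdet' with h | h <;> rw [h] at hsum <;> rcases hsum with h' | h'
      · left; omega
      · right; omega
      · right; omega
      · left; omega
    rw [hnv]
    rcases hV9 with h | h <;> rw [h] <;> norm_num
end

section
/- Let Δ ⊆ ℚ^d be a d-dimensional IP simplex of Gorenstein index g with associated unit fraction partition A(Δ) = (α₀,…,α_d). Then A(Δ) = A(Δ*) and the following identities hold: (i) Vol(Δ)·Vol(Δ*) = (α₀⋯α_d)/g^{d+1}; (ii) λ(Δ*)·Vol(Δ) = λ(Δ)·Vol(Δ*) = (1/g^d)·(α₀⋯α_d)/lcm(α₀,…,α_d); (iii) λ(Δ)·λ(Δ*) = (1/g^{d−1})·(α₀⋯α_d)/lcm(α₀,…,α_d)². -/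
open Finset Matrix

/-- An IP simplex, given by its tuple of rational vertices: affinely independent
vertices with the origin in the interior. -/
def IsIPSimplex {d : ℕ} (v : Fin (d + 1) → Fin d → ℚ) : Prop :=
  AffineIndependent ℚ v ∧ OriginInInterior v

/-- The index of rationality: the least positive integer `k` such that all vertices of
`kΔ` are lattice points. -/
noncomputable def ratIndex {d : ℕ} (v : Fin (d + 1) → Fin d → ℚ) : ℕ :=
  sInf {k : ℕ | 0 < k ∧ ∀ i j, ∃ z : ℤ, (k : ℚ) * v i j = (z : ℚ)}

/-- The weight system of a simplex: `q_i = |det(v_j : j ≠ i)|`. -/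
def weight {d : ℕ} (v : Fin (d + 1) → Fin d → ℚ) (i : Fin (d + 1)) : ℚ :=
  |(Matrix.of fun r c : Fin d => v (i.succAbove r) c).det|

/-- `lam` is the factor of the weight system of `v`: the weight system equals
`lam` times a reduced (integral, gcd 1, positive) weight system. -/
def IsFactor {d : ℕ} (v : Fin (d + 1) → Fin d → ℚ) (lam : ℚ) : Prop :=
  ∃ N : Fin (d + 1) → ℕ, (∀ i, 0 < N i) ∧ Finset.univ.gcd N = 1 ∧
    ∀ i, weight v i = lam * (N i : ℚ)

section UFVolHelpers

lemma det_rows_add_const_aux {n : ℕ} (a : Fin n → Fin n → ℚ) (b : Fin n → ℚ) :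
    (Matrix.of fun r c => a r c + b c).det
      = (Matrix.of a).det + ∑ r, ((Matrix.of a).updateRow r b).det := by
  classical
  set f : AlternatingMap ℚ (Fin n → ℚ) ℚ (Fin n) := Matrix.detRowAlternating with hf
  have key : (Matrix.of fun r c => a r c + b c).det
      = ∑ s : Finset (Fin n), f (s.piecewise (fun _ => b) a) := by
    have h1 : (Matrix.of fun r c => a r c + b c).det = f ((fun _ => b) + a) := by
      congr 1
      ext r c
      simp [add_comm]
    rw [h1]
    exact f.toMultilinearMap.map_add_univ (fun _ => b) a
  rw [key]
  have hzero : ∀ s : Finset (Fin n),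
      s ∉ insert (∅ : Finset (Fin n)) (Finset.univ.image fun r => ({r} : Finset (Fin n))) →
      f (s.piecewise (fun _ => b) a) = 0 := by
    intro s hs
    simp only [Finset.mem_insert, Finset.mem_image, Finset.mem_univ, true_and] at hs
    push_neg at hs
    have hcard : 1 < s.card := by
      rcases Nat.lt_or_ge 1 s.card with h | h
      · exact h
      · exfalso
        interval_cases h' : s.card
        · exact hs.1.ne_empty (Finset.card_eq_zero.mp h')
        · obtain ⟨x, hx⟩ := Finset.card_eq_one.mp h'
          exact hs.2 x hx.symm
    obtain ⟨x, hx, y, hy, hxy⟩ := Finset.one_lt_card.mp hcard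
    refine f.map_eq_zero_of_eq _ ?_ hxy
    simp [Finset.piecewise_eq_of_mem _ _ _ hx, Finset.piecewise_eq_of_mem _ _ _ hy]
  rw [← Finset.sum_subset (Finset.subset_univ _) (fun s _ hs => hzero s hs)]
  rw [Finset.sum_insert (by simp), Finset.sum_image
    (by intro x _ y _ h; exact Finset.singleton_injective h)]
  simp only [Finset.piecewise_empty, Finset.piecewise_singleton]
  exact congrArg₂ HAdd.hAdd rfl (Finset.sum_congr rfl fun r _ => rfl)

lemma det_rows_add_const {n : ℕ} (A : Matrix (Fin n) (Fin n) ℚ) (b : Fin n → ℚ) :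
    (Matrix.of fun r c => A r c + b c).det
      = A.det + ∑ r, (A.updateRow r b).det :=
  det_rows_add_const_aux (fun r c => A r c) b

lemma det_updateRow_finset_sum {n : ℕ} (M : Matrix (Fin n) (Fin n) ℚ) (r : Fin n)
    {ι : Type*} (s : Finset ι) (f : ι → Fin n → ℚ) :
    (M.updateRow r (∑ k ∈ s, f k)).det = ∑ k ∈ s, (M.updateRow r (f k)).det := by
  classical
  induction s using Finset.induction_on with
  | empty =>
      rw [Finset.sum_empty, Finset.sum_empty]
      exact Matrix.det_eq_zero_of_row_eq_zero r (by simp)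
  | insert _ _ h ih =>
      rw [Finset.sum_insert h, Matrix.det_updateRow_add, ih, Finset.sum_insert h]

lemma abs_det_comp_eq {n m : ℕ} (M : Fin m → Fin n → ℚ) (σ τ : Fin n → Fin m)
    (hσ : Function.Injective σ) (hτ : Function.Injective τ)
    (h : Set.range σ = Set.range τ) :
    |(Matrix.of fun r c => M (σ r) c).det| = |(Matrix.of fun r c => M (τ r) c).det| := by
  have he : ∀ r, ∃ s, τ s = σ r := fun r => by
    have : σ r ∈ Set.range τ := h ▸ Set.mem_range_self r
    exact this
  choose e hee using he
  have hinj : Function.Injective e := fun a b hab => hσ (by rw [← hee, ← hee, hab])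
  have hbij : Function.Bijective e := Finite.injective_iff_bijective.mp hinj
  let π : Equiv.Perm (Fin n) := Equiv.ofBijective e hbij
  have hm : (Matrix.of fun r c => M (σ r) c)
      = (Matrix.of fun r c => M (τ r) c).submatrix π id := by
    ext r c
    simp only [Matrix.submatrix_apply, Matrix.of_apply, id_eq]
    rw [show π r = e r from rfl, hee]
  rw [hm, Matrix.det_permute]
  rcases Int.units_eq_one_or (Equiv.Perm.sign π) with hs | hs <;> rw [hs] <;> simp

lemma det_diag_updateRow_one {n : ℕ} (dv : Fin n → ℚ) (r : Fin n) :
    ((Matrix.diagonal dv).updateRow r (fun _ => (1 : ℚ))).det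
      = ∏ s ∈ Finset.univ.erase r, dv s := by
  classical
  have h1 : (fun _ : Fin n => (1 : ℚ)) = ∑ s : Fin n, Pi.single s (1 : ℚ) := by
    ext c; simp [Pi.single_apply]
  rw [h1, det_updateRow_finset_sum]
  have hterm : ∀ s : Fin n, s ≠ r →
      ((Matrix.diagonal dv).updateRow r (Pi.single s (1 : ℚ))).det = 0 := by
    intro s hs
    apply Matrix.det_eq_zero_of_column_eq_zero r
    intro t
    by_cases ht : t = r
    · subst ht
      simp [Pi.single_apply, hs]
    · simp [Matrix.updateRow_ne ht, Matrix.diagonal_apply_ne _ ht]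
  rw [Finset.sum_eq_single r (fun s _ hs => hterm s hs) (by simp)]
  have hd : (Matrix.diagonal dv).updateRow r (Pi.single r (1 : ℚ))
      = Matrix.diagonal (Function.update dv r 1) := by
    ext t c
    rcases eq_or_ne t r with rfl | ht
    · rw [Matrix.updateRow_self]
      by_cases hc : t = c <;>
        simp [Pi.single_apply, Matrix.diagonal_apply, hc, eq_comm]
    · simp [Matrix.updateRow_ne ht, Matrix.diagonal_apply, Function.update_of_ne ht]
  rw [hd, Matrix.det_diagonal, Finset.prod_update_of_mem (Finset.mem_univ r), one_mul,
    Finset.erase_eq]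

lemma normVol_mul_w0 {d : ℕ} (x : Fin (d + 1) → Fin d → ℚ) (w : Fin (d + 1) → ℚ)
    (hw : ∀ i, 0 < w i) (hsum : ∑ i, w i = 1) (h0 : ∀ j, ∑ i, w i * x i j = 0) :
    normVol x * w 0 = weight x 0 := by
  have hw0 : w 0 ≠ 0 := ne_of_gt (hw 0)
  set A : Matrix (Fin d) (Fin d) ℚ := Matrix.of (fun r c => x r.succ c) with hA
  have hb : (fun c => -(x 0 c)) = ∑ k : Fin d, (w k.succ / w 0) • (x k.succ) := by
    funext c
    have h := h0 c
    rw [Fin.sum_univ_succ] at h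
    rw [Finset.sum_apply]
    have : ∑ k : Fin d, ((w k.succ / w 0) • x k.succ) c
        = (∑ k : Fin d, w k.succ * x k.succ c) / w 0 := by
      rw [Finset.sum_div]
      exact Finset.sum_congr rfl fun k _ => by
        show (w k.succ / w 0) * x k.succ c = w k.succ * x k.succ c / w 0
        ring
    rw [this, eq_div_iff hw0]
    linarith
  have hdet : (Matrix.of fun r c : Fin d => x r.succ c - x 0 c).det = A.det / w 0 := by
    have e1 : (Matrix.of fun r c : Fin d => x r.succ c - x 0 c)
        = Matrix.of fun r c => A r c + (fun c => -(x 0 c)) c := by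
      ext r c; simp [hA, sub_eq_add_neg]
    rw [e1, det_rows_add_const]
    have e2 : ∀ r : Fin d, (A.updateRow r (fun c => -(x 0 c))).det
        = (w r.succ / w 0) * A.det := by
      intro r
      rw [hb, det_updateRow_finset_sum]
      rw [Finset.sum_eq_single r (fun k _ hk => by
        rw [Matrix.det_updateRow_smul,
          show (x k.succ : Fin d → ℚ) = A k from rfl,
          Matrix.det_updateRow_eq_zero hk, mul_zero]) (by simp)]
      rw [Matrix.det_updateRow_smul,
        show (x r.succ : Fin d → ℚ) = A r from rfl, Matrix.updateRow_eq_self]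
    have hsum' : ∑ r : Fin d, w r.succ = 1 - w 0 := by
      rw [Fin.sum_univ_succ] at hsum; linarith
    have hs2 : ∑ r : Fin d, (A.updateRow r fun c => -x 0 c).det
        = ((1 - w 0) / w 0) * A.det := by
      rw [Finset.sum_congr rfl fun r _ => e2 r, ← Finset.sum_mul, ← Finset.sum_div, hsum']
    rw [hs2]
    field_simp
    ring
  have h0pos := hw 0
  rw [normVol, hdet, abs_div, abs_of_pos h0pos, div_mul_cancel₀ _ (ne_of_gt h0pos)]
  rw [weight]
  congr 1

lemma weight_mul_w {d : ℕ} (x : Fin (d + 1) → Fin d → ℚ) (w : Fin (d + 1) → ℚ)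
    (hw : ∀ i, 0 < w i) (h0 : ∀ j, ∑ i, w i * x i j = 0)
    {i j : Fin (d + 1)} (hij : i ≠ j) :
    w i * weight x j = w j * weight x i := by
  obtain ⟨r0, hr0⟩ := Fin.exists_succAbove_eq hij
  obtain ⟨r1, hr1⟩ := Fin.exists_succAbove_eq (Ne.symm hij)
  set X : Matrix (Fin d) (Fin d) ℚ := Matrix.of (fun r c => x (j.succAbove r) c) with hX
  have hXr0 : X r0 = x i := by funext c; simp [hX, hr0]
  have hxi : (w i) • (x i) = ∑ r : Fin d, (-(w (i.succAbove r))) • x (i.succAbove r) := by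
    funext c
    have h := h0 c
    rw [Fin.sum_univ_succAbove _ i] at h
    rw [Finset.sum_apply]
    have : ∀ r : Fin d, ((-(w (i.succAbove r))) • x (i.succAbove r)) c
        = -(w (i.succAbove r) * x (i.succAbove r) c) := fun r => by
      show -(w (i.succAbove r)) * x (i.succAbove r) c = _; ring
    rw [Finset.sum_congr rfl fun r _ => this r]
    show w i * x i c = _
    have hsn : ∑ r : Fin d, -(w (i.succAbove r) * x (i.succAbove r) c)
        = -∑ r : Fin d, w (i.succAbove r) * x (i.succAbove r) c := by
      exact Finset.sum_neg_distrib (f := fun r : Fin d => w (i.succAbove r) * x (i.succAbove r) c)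
    rw [hsn]
    linarith
  have key : w i * X.det = -(w j) * (X.updateRow r0 (x j)).det := by
    have step1 : w i * X.det = (X.updateRow r0 ((w i) • x i)).det := by
      rw [Matrix.det_updateRow_smul, ← hXr0, Matrix.updateRow_eq_self]
    rw [step1, hxi, det_updateRow_finset_sum]
    rw [Finset.sum_eq_single r1 (fun r _ hr => by
      rw [Matrix.det_updateRow_smul]
      have hne_i : i.succAbove r ≠ i := Fin.succAbove_ne i r
      have hne_j : i.succAbove r ≠ j := fun hcon =>
        hr (Fin.succAbove_right_injective (hcon.trans hr1.symm))
      obtain ⟨r', hr'⟩ := Fin.exists_succAbove_eq hne_j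
      have hr'0 : r' ≠ r0 := fun hcon => hne_i (by rw [← hr', hcon, hr0])
      have hrow : x (i.succAbove r) = X r' := by funext c; simp [hX, hr']
      rw [hrow, Matrix.det_updateRow_eq_zero hr'0, mul_zero]) (by simp)]
    rw [Matrix.det_updateRow_smul, hr1]
  have habs : w i * weight x j = w j * |(X.updateRow r0 (x j)).det| := by
    have := congrArg abs key
    rw [abs_mul, abs_mul, abs_of_pos (hw i), abs_neg, abs_of_pos (hw j)] at this
    exact this
  rw [habs]
  congr 1
  let σ : Fin d → Fin (d + 1) := fun r => if r = r0 then j else j.succAbove r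
  have hmat : X.updateRow r0 (x j) = Matrix.of (fun r c => x (σ r) c) := by
    ext r c
    by_cases hr : r = r0
    · subst hr; simp [σ, Matrix.updateRow_self]
    · simp [σ, hr, Matrix.updateRow_ne hr, hX]
  have hσinj : Function.Injective σ := by
    intro a b hab
    by_cases ha : a = r0 <;> by_cases hb : b = r0
    · rw [ha, hb]
    · exact absurd (by simpa [σ, ha, hb] using hab.symm) (Fin.succAbove_ne j b)
    · exact absurd (by simpa [σ, ha, hb] using hab) (Fin.succAbove_ne j a)
    · simp only [σ, if_neg ha, if_neg hb] at hab
      exact Fin.succAbove_right_injective hab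
  have hτinj : Function.Injective (i.succAbove) := Fin.succAbove_right_injective
  have hrange : Set.range σ = Set.range (i.succAbove) := by
    rw [Fin.range_succAbove]
    ext k
    constructor
    · rintro ⟨r, rfl⟩
      by_cases hr : r = r0
      · simp [σ, hr]
        exact Ne.symm hij
      · simp only [σ, if_neg hr, Set.mem_compl_iff, Set.mem_singleton_iff]
        intro hcon
        exact hr (Fin.succAbove_right_injective (hcon.trans hr0.symm))
    · intro hk
      simp only [Set.mem_compl_iff, Set.mem_singleton_iff] at hk
      by_cases hkj : k = j
      · exact ⟨r0, by simp [σ, hkj]⟩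
      · obtain ⟨r, hr⟩ := Fin.exists_succAbove_eq (Ne.intro hkj)
        have hrr0 : r ≠ r0 := fun hcon => hk (by rw [← hr, hcon, hr0])
        exact ⟨r, by simp [σ, hrr0, hr]⟩
  have := abs_det_comp_eq x σ (i.succAbove) hσinj hτinj hrange
  rw [hmat]
  rw [weight] at *
  convert this using 2

lemma weight_eq {d : ℕ} (x : Fin (d + 1) → Fin d → ℚ) (w : Fin (d + 1) → ℚ)
    (hw : ∀ i, 0 < w i) (hsum : ∑ i, w i = 1) (h0 : ∀ j, ∑ i, w i * x i j = 0)
    (i : Fin (d + 1)) : weight x i = w i * normVol x := by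
  by_cases hi : i = 0
  · subst hi
    rw [← normVol_mul_w0 x w hw hsum h0]; ring
  · have h := weight_mul_w x w hw h0 (show (0 : Fin (d + 1)) ≠ i from Ne.symm hi)
    have h2 := normVol_mul_w0 x w hw hsum h0
    have hw0 := (hw 0).ne'
    rw [← h2] at h
    have h3 : w 0 * weight x i = w 0 * (w i * normVol x) := by rw [h]; ring
    exact mul_left_cancel₀ hw0 h3

end UFVolHelpers

/-- For a `d`-dimensional IP simplex `Δ` of Gorenstein index `g`
with associated unit fraction partition `A(Δ) = (α_0,…,α_d)` one has `A(Δ) = A(Δ*)`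
and the identities (i) `Vol(Δ)·Vol(Δ*) = (α_0⋯α_d)/g^{d+1}`,
(ii) `λ(Δ*)·Vol(Δ) = λ(Δ)·Vol(Δ*) = (1/g^d)·(α_0⋯α_d)/lcm(α_0,…,α_d)`,
(iii) `λ(Δ)·λ(Δ*) = (1/g^{d-1})·(α_0⋯α_d)/lcm(α_0,…,α_d)²`. -/

theorem uf_vol_identities
    (d g : ℕ) (hd : 2 ≤ d) (hg : 1 ≤ g)
    (v : Fin (d + 1) → Fin d → ℚ) (hIP : IsIPSimplex v)
    (u : Fin (d + 1) → Fin d → ℚ)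
    (hu : ∀ i j, i ≠ j → ∑ c, u i c * v j c = -1)
    (hGor : ratIndex v * ratIndex u = g)
    (α : Fin (d + 1) → ℕ)
    (hα : ∀ i, (α i : ℚ) = (g : ℚ) * (∑ j, weight v j) / weight v i)
    (lamv lamu : ℚ) (hlamv : IsFactor v lamv) (hlamu : IsFactor u lamu) :
    (∀ i, (α i : ℚ) = (g : ℚ) * (∑ j, weight u j) / weight u i) ∧
      normVol v * normVol u = (∏ i, (α i : ℚ)) / (g : ℚ) ^ (d + 1) ∧
      lamu * normVol v = lamv * normVol u ∧
      lamv * normVol u =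
        1 / (g : ℚ) ^ d * (∏ i, (α i : ℚ)) / ((Finset.univ.lcm α : ℕ) : ℚ) ∧
      lamv * lamu =
        1 / (g : ℚ) ^ (d - 1) * (∏ i, (α i : ℚ)) / (((Finset.univ.lcm α : ℕ) : ℚ)) ^ 2 := by
  classical
  obtain ⟨hAI, w, hwpos, hwsum, hworig⟩ := hIP
  have hgQ : (0 : ℚ) < (g : ℚ) := by exact_mod_cast hg
  have hgne : (g : ℚ) ≠ 0 := hgQ.ne'
  -- affine independence gives normVol v ≠ 0
  have hTne : (Matrix.of fun r c : Fin d => v r.succ c - v 0 c).det ≠ 0 := by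
    rw [affineIndependent_iff_linearIndependent_vsub ℚ v 0] at hAI
    let e : Fin d ≃ {x : Fin (d + 1) // x ≠ 0} :=
      { toFun := fun r => ⟨r.succ, Fin.succ_ne_zero r⟩
        invFun := fun x => (x.1).pred x.2
        left_inv := fun r => by simp
        right_inv := fun x => by simp }
    have hli : LinearIndependent ℚ
        (fun r : Fin d => (Matrix.of fun r c : Fin d => v r.succ c - v 0 c) r) := by
      have h2 := (linearIndependent_equiv e
        (f := fun i : {x : Fin (d + 1) // x ≠ 0} => v i -ᵥ v 0)).mpr hAI
      have hfun : (fun r : Fin d => (Matrix.of fun r c : Fin d => v r.succ c - v 0 c) r)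
          = fun r : Fin d => v (e r : Fin (d + 1)) -ᵥ v 0 := by
        funext r
        funext c
        simp [e, vsub_eq_sub]
      rw [hfun]
      exact h2
    have hun := Matrix.linearIndependent_rows_iff_isUnit.mp hli
    exact ((Matrix.isUnit_iff_isUnit_det _).mp hun).ne_zero
  have hTpos : 0 < normVol v := abs_pos.mpr hTne
  have hwv : ∀ i, weight v i = w i * normVol v := weight_eq v w hwpos hwsum hworig
  -- diagonal pairings
  have hdiag : ∀ i, ∑ c, u i c * v i c = (1 - w i) / w i := by
    intro i
    have h1 : ∑ j, w j * (∑ c, u i c * v j c) = 0 := by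
      have : ∑ j, w j * (∑ c, u i c * v j c) = ∑ c, u i c * (∑ j, w j * v j c) := by
        simp_rw [Finset.mul_sum]
        rw [Finset.sum_comm]
        exact Finset.sum_congr rfl fun c _ => Finset.sum_congr rfl fun j _ => by ring
      rw [this]
      simp [hworig]
    rw [Fin.sum_univ_succAbove _ i] at h1
    have h2 : ∀ r : Fin d, w (i.succAbove r) * (∑ c, u i c * v (i.succAbove r) c)
        = w (i.succAbove r) * (-1) := fun r => by
      rw [hu _ _ (Fin.ne_succAbove i r)]
    rw [Finset.sum_congr rfl fun r _ => h2 r, ← Finset.sum_mul] at h1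
    have h3 : ∑ r : Fin d, w (i.succAbove r) = 1 - w i := by
      have := hwsum
      rw [Fin.sum_univ_succAbove _ i] at this
      linarith
    rw [h3] at h1
    have := (hwpos i).ne'
    field_simp
    linarith
  -- origin is in the interior of the dual simplex, with the same weights
  have hzu : ∀ c, ∑ i, w i * u i c = 0 := by
    have hperp : ∀ j : Fin (d + 1), ∑ c, (∑ i, w i * u i c) * v j c = 0 := by
      intro j
      have hswap : ∑ c, (∑ i, w i * u i c) * v j c
          = ∑ i, w i * (∑ c, u i c * v j c) := by
        simp_rw [Finset.sum_mul, Finset.mul_sum]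
        rw [Finset.sum_comm]
        exact Finset.sum_congr rfl fun i _ => Finset.sum_congr rfl fun c _ => by ring
      rw [hswap, Fin.sum_univ_succAbove _ j, hdiag j,
        Finset.sum_congr rfl fun r _ => by
          rw [hu _ _ (Fin.succAbove_ne j r)] ]
      have h3 : ∑ r : Fin d, w (j.succAbove r) * (-1) = -(1 - w j) := by
        rw [← Finset.sum_mul]
        have : ∑ r : Fin d, w (j.succAbove r) = 1 - w j := by
          have := hwsum
          rw [Fin.sum_univ_succAbove _ j] at this
          linarith
        rw [this]; ring
      rw [h3, mul_comm (w j), div_mul_cancel₀ _ (hwpos j).ne']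
      ring
    have hBdet : (Matrix.of fun r c : Fin d => v r.succ c).det ≠ 0 := by
      intro hcon
      have : weight v 0 = 0 := by
        rw [weight, show (0 : Fin (d + 1)).succAbove = Fin.succ from rfl, hcon, abs_zero]
      rw [hwv 0] at this
      exact absurd this (mul_pos (hwpos 0) hTpos).ne' 
    have hmul : (Matrix.of fun r c : Fin d => v r.succ c).mulVec (fun c => ∑ i, w i * u i c) = 0 := by
      funext r
      show ∑ c, v r.succ c * (∑ i, w i * u i c) = 0
      rw [Finset.sum_congr rfl fun c _ => mul_comm (v r.succ c) _]
      exact hperp r.succ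
    have := Matrix.eq_zero_of_mulVec_eq_zero hBdet hmul
    exact fun c => congrFun this c
  have hwu : ∀ i, weight u i = w i * normVol u := weight_eq u w hwpos hwsum hzu
  -- the product determinant identity
  have hF3 : normVol v * normVol u * ∏ i, w i = 1 := by
    set U0 : Matrix (Fin d) (Fin d) ℚ := Matrix.of fun r c => u r.succ c with hU0
    set V0 : Matrix (Fin d) (Fin d) ℚ := Matrix.of fun r c => v r.succ c with hV0
    set dv : Fin d → ℚ := fun r => 1 / w r.succ with hdv
    have hP : U0 * V0ᵀ = Matrix.of fun r s =>
        (Matrix.diagonal dv) r s + (fun _ : Fin d => (-1 : ℚ)) s := by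
      ext r s
      rw [Matrix.mul_apply]
      simp only [Matrix.transpose_apply, Matrix.of_apply, hU0, hV0]
      by_cases hrs : r = s
      · subst hrs
        have := hdiag r.succ
        rw [Matrix.diagonal_apply_eq]
        rw [this]
        have := (hwpos r.succ).ne'
        field_simp [hdv]
        simp only [hdv]; rw [mul_add, mul_one_div_cancel this]; ring
      · rw [hu _ _ (fun hcon => hrs (Fin.succ_injective _ hcon)),
          Matrix.diagonal_apply_ne _ hrs]
        ring
    have hsum' : ∑ r : Fin d, w r.succ = 1 - w 0 := by
      have := hwsum
      rw [Fin.sum_univ_succ] at this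
      linarith
    have hprod_erase : ∀ r : Fin d, ∏ s ∈ Finset.univ.erase r, dv s
        = (∏ s : Fin d, dv s) * w r.succ := by
      intro r
      have h1 : dv r * ∏ s ∈ Finset.univ.erase r, dv s = ∏ s : Fin d, dv s :=
        Finset.mul_prod_erase _ _ (Finset.mem_univ r)
      have hdvr : w r.succ * dv r = 1 := mul_one_div_cancel (hwpos r.succ).ne'
      calc ∏ s ∈ Finset.univ.erase r, dv s
          = (w r.succ * dv r) * ∏ s ∈ Finset.univ.erase r, dv s := by rw [hdvr, one_mul]
        _ = w r.succ * (dv r * ∏ s ∈ Finset.univ.erase r, dv s) := by ring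
        _ = w r.succ * ∏ s : Fin d, dv s := by rw [h1]
        _ = (∏ s : Fin d, dv s) * w r.succ := by ring
    have hdetP : (U0 * V0ᵀ).det = (∏ s : Fin d, dv s) * w 0 := by
      rw [hP, det_rows_add_const (Matrix.diagonal dv) (fun _ => (-1 : ℚ))]
      have hup : ∀ r : Fin d, ((Matrix.diagonal dv).updateRow r fun _ => (-1 : ℚ)).det
          = -((∏ s : Fin d, dv s) * w r.succ) := by
        intro r
        have hsm : (fun _ : Fin d => (-1 : ℚ)) = (-1 : ℚ) • (fun _ : Fin d => (1 : ℚ)) := by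
          funext c; simp
        rw [hsm, Matrix.det_updateRow_smul, det_diag_updateRow_one, hprod_erase r]
        ring
      rw [Matrix.det_diagonal, Finset.sum_congr rfl fun r _ => hup r]
      have hns : ∑ r : Fin d, -((∏ s : Fin d, dv s) * w r.succ)
          = -((∏ s : Fin d, dv s) * (1 - w 0)) := by
        rw [Finset.sum_neg_distrib, ← Finset.mul_sum, hsum']
      rw [hns]
      ring
    have habs : weight u 0 * weight v 0 = (∏ s : Fin d, dv s) * w 0 := by
      have h1 : |(U0 * V0ᵀ).det| = weight u 0 * weight v 0 := by
        rw [Matrix.det_mul, Matrix.det_transpose, abs_mul]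
        rfl
      have hdvpos : ∀ s : Fin d, 0 < dv s := fun s => by
        have := hwpos s.succ
        rw [hdv]
        positivity
      have h2 : (0 : ℚ) < (∏ s : Fin d, dv s) * w 0 :=
        mul_pos (Finset.prod_pos fun s _ => hdvpos s) (hwpos 0)
      rw [← h1, hdetP, abs_of_pos h2]
    rw [hwu 0, hwv 0] at habs
    have hprodw : ∏ i, w i = w 0 * ∏ r : Fin d, w r.succ := Fin.prod_univ_succ w
    have hdvw : (∏ s : Fin d, dv s) * (∏ r : Fin d, w r.succ) = 1 := by
      rw [← Finset.prod_mul_distrib]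
      rw [Finset.prod_congr rfl fun s _ => mul_comm (dv s) (w s.succ)]
      rw [Finset.prod_congr rfl fun s _ => mul_one_div_cancel (hwpos s.succ).ne']
      exact Finset.prod_const_one
    have hcan : w 0 * (normVol u * normVol v) = ∏ s : Fin d, dv s := by
      apply mul_left_cancel₀ (hwpos 0).ne'
      linear_combination habs
    calc normVol v * normVol u * ∏ i, w i
        = (w 0 * (normVol u * normVol v)) * ∏ r : Fin d, w r.succ := by
          rw [hprodw]; ring
      _ = (∏ s : Fin d, dv s) * ∏ r : Fin d, w r.succ := by rw [hcan]
      _ = 1 := hdvw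
  -- final algebra
  have hTune : normVol u ≠ 0 := by
    intro hcon
    rw [hcon] at hF3
    simp at hF3
  have hTupos : 0 < normVol u := lt_of_le_of_ne (abs_nonneg _) (Ne.symm hTune)
  have hWpos : 0 < ∏ i, w i := Finset.prod_pos fun i _ => hwpos i
  have hsumv : ∑ j, weight v j = normVol v := by
    rw [Finset.sum_congr rfl fun j _ => hwv j, ← Finset.sum_mul, hwsum, one_mul]
  have hsumu : ∑ j, weight u j = normVol u := by
    rw [Finset.sum_congr rfl fun j _ => hwu j, ← Finset.sum_mul, hwsum, one_mul]
  have hαval : ∀ i, (α i : ℚ) * w i = g := by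
    intro i
    have h := hα i
    rw [hsumv, hwv i] at h
    have hwine := (hwpos i).ne'
    have hTne' := hTpos.ne'
    rw [h]
    field_simp
  have goal1 : ∀ i, (α i : ℚ) = (g : ℚ) * (∑ j, weight u j) / weight u i := by
    intro i
    rw [hsumu, hwu i]
    rw [eq_div_iff (mul_ne_zero (hwpos i).ne' hTune)]
    linear_combination normVol u * hαval i
  have hprodα : (∏ i, (α i : ℚ)) * ∏ i, w i = (g : ℚ) ^ (d + 1) := by
    rw [← Finset.prod_mul_distrib, Finset.prod_congr rfl fun i _ => hαval i,
      Finset.prod_const, Finset.card_univ, Fintype.card_fin]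
  have hi : normVol v * normVol u * (g : ℚ) ^ (d + 1) = ∏ i, (α i : ℚ) := by
    linear_combination (-(normVol v * normVol u)) * hprodα + (∏ i, (α i : ℚ)) * hF3
  have hgoal2 : normVol v * normVol u = (∏ i, (α i : ℚ)) / (g : ℚ) ^ (d + 1) := by
    rw [eq_div_iff (pow_ne_zero _ hgne)]
    exact hi
  obtain ⟨N, hNpos, hNgcd, hNw⟩ := hlamv
  obtain ⟨Mm, hMpos, hMgcd, hMw⟩ := hlamu
  have hNQ : ∀ i, (0 : ℚ) < N i := fun i => by exact_mod_cast hNpos i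
  have hMQ : ∀ i, (0 : ℚ) < Mm i := fun i => by exact_mod_cast hMpos i
  have hlamvpos : 0 < lamv := by
    have h := (hNw 0).symm.trans (hwv 0)
    nlinarith [hNQ 0, mul_pos (hwpos 0) hTpos]
  have hlamupos : 0 < lamu := by
    have h := (hMw 0).symm.trans (hwu 0)
    nlinarith [hMQ 0, mul_pos (hwpos 0) hTupos]
  have hMN : ∀ i, Mm i = N i := by
    have hcross : ∀ i j : Fin (d + 1), (Mm i : ℚ) * N j = (Mm j : ℚ) * N i := by
      intro i j
      have e1 : lamu * (Mm i : ℚ) = w i * normVol u := (hMw i).symm.trans (hwu i)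
      have e2 : lamv * (N j : ℚ) = w j * normVol v := (hNw j).symm.trans (hwv j)
      have e3 : lamu * (Mm j : ℚ) = w j * normVol u := (hMw j).symm.trans (hwu j)
      have e4 : lamv * (N i : ℚ) = w i * normVol v := (hNw i).symm.trans (hwv i)
      have h5 : (lamu * lamv) * ((Mm i : ℚ) * N j) = (lamu * lamv) * ((Mm j : ℚ) * N i) := by
        calc (lamu * lamv) * ((Mm i : ℚ) * N j) = (lamu * Mm i) * (lamv * N j) := by ring
          _ = (w i * normVol u) * (w j * normVol v) := by rw [e1, e2]
          _ = (w j * normVol u) * (w i * normVol v) := by ring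
          _ = (lamu * Mm j) * (lamv * N i) := by rw [e3, e4]
          _ = (lamu * lamv) * ((Mm j : ℚ) * N i) := by ring
      exact mul_left_cancel₀ (mul_ne_zero hlamupos.ne' hlamvpos.ne') h5
    have hcrossN : ∀ i j, Mm i * N j = Mm j * N i := fun i j => by exact_mod_cast hcross i j
    intro i
    calc Mm i = Mm i * Finset.univ.gcd N := by rw [hNgcd, mul_one]
      _ = Finset.univ.gcd (fun j => Mm i * N j) := by rw [Finset.gcd_mul_left, normalize_eq]
      _ = Finset.univ.gcd (fun j => N i * Mm j) := by
          refine Finset.gcd_congr rfl fun j _ => ?_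
          rw [hcrossN i j]
          ring
      _ = N i * Finset.univ.gcd Mm := by rw [Finset.gcd_mul_left, normalize_eq]
      _ = N i := by rw [hMgcd, mul_one]
  have hKval : ∀ i, lamv * ((α i : ℚ) * N i) = g * normVol v := by
    intro i
    have e2 : lamv * (N i : ℚ) = w i * normVol v := (hNw i).symm.trans (hwv i)
    calc lamv * ((α i : ℚ) * N i) = (α i : ℚ) * (lamv * N i) := by ring
      _ = (α i : ℚ) * (w i * normVol v) := by rw [e2]
      _ = ((α i : ℚ) * w i) * normVol v := by ring
      _ = g * normVol v := by rw [hαval i]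
  have hKvalu : ∀ i, lamu * ((α i : ℚ) * N i) = g * normVol u := by
    intro i
    have e1 : lamu * (Mm i : ℚ) = w i * normVol u := (hMw i).symm.trans (hwu i)
    rw [hMN i] at e1
    calc lamu * ((α i : ℚ) * N i) = (α i : ℚ) * (lamu * N i) := by ring
      _ = (α i : ℚ) * (w i * normVol u) := by rw [e1]
      _ = ((α i : ℚ) * w i) * normVol u := by ring
      _ = g * normVol u := by rw [hαval i]
  set K : ℕ := α 0 * N 0 with hK
  have hKconst : ∀ i, α i * N i = K := by
    intro i
    have h5 : lamv * ((α i : ℚ) * N i) = lamv * ((α 0 : ℚ) * N 0) := by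
      rw [hKval i, hKval 0]
    have h6 : ((α i : ℚ) * N i) = ((α 0 : ℚ) * N 0) := mul_left_cancel₀ hlamvpos.ne' h5
    exact_mod_cast h6
  have hαpos : ∀ i, 0 < α i := by
    intro i
    rcases Nat.eq_zero_or_pos (α i) with h | h
    · exfalso
      have h9 := hαval i
      rw [h] at h9
      simp at h9
      exact hgne h9.symm
    · exact h
  have hKpos : 0 < K := Nat.mul_pos (hαpos 0) (hNpos 0)
  have hlcm : Finset.univ.lcm α = K := by
    apply Nat.dvd_antisymm
    · exact Finset.lcm_dvd fun i _ => ⟨N i, (hKconst i).symm⟩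
    · have hdiv : ∀ i, K ∣ Finset.univ.lcm α * N i := by
        intro i
        obtain ⟨c, hc⟩ := Finset.dvd_lcm (f := α) (Finset.mem_univ i)
        exact ⟨c, by rw [hc, ← hKconst i]; ring⟩
      have h7 : K ∣ Finset.univ.gcd (fun i => Finset.univ.lcm α * N i) :=
        Finset.dvd_gcd fun i _ => hdiv i
      rwa [Finset.gcd_mul_left, hNgcd, mul_one, normalize_eq] at h7
  have h8 : (K : ℚ) = (α 0 : ℚ) * (N 0 : ℚ) := by rw [hK]; push_cast; ring
  have hKQ : lamv * (K : ℚ) = g * normVol v := by rw [h8, ← mul_assoc]; linear_combination hKval 0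
  have hKQu : lamu * (K : ℚ) = g * normVol u := by rw [h8, ← mul_assoc]; linear_combination hKvalu 0
  have hKne : ((K : ℕ) : ℚ) ≠ 0 := by
    have : (0 : ℚ) < (K : ℚ) := by exact_mod_cast hKpos
    exact this.ne'
  refine ⟨goal1, hgoal2, ?_, ?_, ?_⟩
  · apply mul_right_cancel₀ hKne
    linear_combination normVol v * hKQu - normVol u * hKQ
  · rw [hlcm]
    have key : lamv * normVol u * ((g : ℚ) ^ d * K) = ∏ i, (α i : ℚ) := by
      have hpow : (g : ℚ) ^ d * (g : ℚ) = (g : ℚ) ^ (d + 1) := by rw [← pow_succ]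
      linear_combination ((g : ℚ) ^ d * normVol u) * hKQ
        + (normVol v * normVol u) * hpow + hi
    rw [eq_div_iff hKne, one_div, inv_mul_eq_div, eq_div_iff (pow_ne_zero d hgne)]
    linear_combination key
  · rw [hlcm]
    have hpow2 : (g : ℚ) ^ (d - 1) * (g : ℚ) ^ 2 = (g : ℚ) ^ (d + 1) := by
      rw [← pow_add]
      congr 1
      omega
    have key3 : lamv * lamu * ((g : ℚ) ^ (d - 1) * (K : ℚ) ^ 2) = ∏ i, (α i : ℚ) := by
      linear_combination (lamu * (K : ℚ) * (g : ℚ) ^ (d - 1)) * hKQ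
        + ((g : ℚ) ^ (d - 1) * (g : ℚ) * normVol v) * hKQu
        + (normVol v * normVol u) * hpow2 + hi
    rw [eq_div_iff (pow_ne_zero 2 hKne), one_div, inv_mul_eq_div,
      eq_div_iff (pow_ne_zero _ hgne)]
    linear_combination key3
end

section
/- Let g ≥ 1 and n ≥ 3. For all integers r with 1 ≤ r ≤ n, one has r^r · t_{g,n−r+1}^{r+1} ≤ t_{g,n}², and equality holds if and only if r = 1. -/
/-- The `g`-Sylvester sequence: `s_{g,1} = g+1`, `s_{g,k+1} = s_{g,k}(s_{g,k}-1)+1`.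
(The value at `0` is junk and never used.) -/
def sylv (g : ℕ) : ℕ → ℕ
  | 0 => 0
  | 1 => g + 1
  | k + 2 => sylv g (k + 1) * (sylv g (k + 1) - 1) + 1

/-- The truncated `g`-Sylvester sequence `t_{g,k} = s_{g,k} - 1`. -/
def tsylv (g k : ℕ) : ℕ := sylv g k - 1

lemma sylv_succ_pos (g k : ℕ) : 1 ≤ sylv g (k + 1) := by
  cases k with
  | zero => simp [sylv]
  | succ j => simp [sylv]

lemma tsylv_rec (g k : ℕ) (hk : 1 ≤ k) :
    tsylv g (k + 1) = tsylv g k * (tsylv g k + 1) := by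
  obtain ⟨j, rfl⟩ : ∃ j, k = j + 1 := ⟨k - 1, by omega⟩
  have hs := sylv_succ_pos g j
  have h1 : tsylv g (j + 1) + 1 = sylv g (j + 1) := by
    unfold tsylv; omega
  show sylv g (j + 1) * (sylv g (j + 1) - 1) + 1 - 1 = _
  rw [h1, Nat.add_sub_cancel]
  show sylv g (j+1) * tsylv g (j+1) = _
  ring

lemma tsylv_one (g : ℕ) : tsylv g 1 = g := by simp [tsylv, sylv]

lemma tsylv_ge_one (g k : ℕ) (hg : 1 ≤ g) (hk : 1 ≤ k) : 1 ≤ tsylv g k := by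
  induction k, hk using Nat.le_induction with
  | base => rw [tsylv_one]; exact hg
  | succ k hk ih =>
      rw [tsylv_rec g k hk]
      calc 1 ≤ tsylv g k := ih
        _ ≤ tsylv g k * (tsylv g k + 1) := Nat.le_mul_of_pos_right _ (by omega)

lemma tsylv_ge_two (g k : ℕ) (hg : 1 ≤ g) (hk : 2 ≤ k) : 2 ≤ tsylv g k := by
  induction k, hk using Nat.le_induction with
  | base =>
      rw [show (2:ℕ) = 1 + 1 from rfl, tsylv_rec g 1 le_rfl, tsylv_one]
      nlinarith
  | succ k hk ih =>
      rw [tsylv_rec g k (by omega)]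
      calc 2 ≤ tsylv g k := ih
        _ ≤ tsylv g k * (tsylv g k + 1) := Nat.le_mul_of_pos_right _ (by omega)

lemma pow_lemA (r : ℕ) (hr : 1 ≤ r) : (r+1)^(r+1) ≤ 2^(r+1) * r^r := by
  rcases eq_or_lt_of_le hr with h1 | h2
  · subst h1; norm_num
  · have hr2 : 2 ≤ r := h2
    clear hr h2
    induction r, hr2 using Nat.le_induction with
    | base => norm_num
    | succ r hr ih =>
        have h1 : (r+2)*r ≤ (r+1)^2 := by nlinarith
        have h2 : (r+2)^2 ≤ 2*(r+1)^2 := by nlinarith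
        have key : (r+1+1)^(r+1+1) * r^r ≤ 2^(r+1+1) * (r+1)^(r+1) * r^r := by
          calc (r+1+1)^(r+1+1) * r^r = (r+2)^2 * ((r+2)^r * r^r) := by ring
            _ = (r+2)^2 * ((r+2)*r)^r := by rw [mul_pow]
            _ ≤ (2*(r+1)^2) * ((r+1)^2)^r := Nat.mul_le_mul h2 (Nat.pow_le_pow_left h1 r)
            _ = 2 * ((r+1)^(r+1) * (r+1)^(r+1)) := by rw [← pow_mul]; ring
            _ ≤ 2 * ((2^(r+1) * r^r) * (r+1)^(r+1)) :=
                Nat.mul_le_mul_left 2 (Nat.mul_le_mul_right _ ih)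
            _ = 2^(r+1+1) * (r+1)^(r+1) * r^r := by ring
        exact Nat.le_of_mul_le_mul_right key (by positivity)

lemma pow_lemC (r t : ℕ) (hr : 1 ≤ r) (ht : 1 ≤ t) : 2^(r+1) * t ≤ (t+1)^(r+1) := by
  obtain ⟨j, rfl⟩ : ∃ j, r = j + 1 := ⟨r - 1, by omega⟩
  obtain ⟨s, rfl⟩ : ∃ s, t = s + 1 := ⟨t - 1, by omega⟩
  have h4 : 4 * (s+1) ≤ (s+1+1)^2 := by nlinarith [sq_nonneg s]
  calc 2^(j+1+1) * (s+1) = (4 * (s+1)) * 2^j := by ring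
    _ ≤ (s+1+1)^2 * (s+1+1)^j :=
        Nat.mul_le_mul h4 (Nat.pow_le_pow_left (by omega) j)
    _ = (s+1+1)^(j+1+1) := by rw [← pow_add]; ring_nf

lemma sq_lt_aux (t : ℕ) (ht : 2 ≤ t) : 4 * t < (t+1)^2 := by
  obtain ⟨s, rfl⟩ : ∃ s, t = s + 2 := ⟨t - 2, by omega⟩
  nlinarith [sq_nonneg s]

lemma sylvester_strict (g n : ℕ) (hg : 1 ≤ g) (hn : 3 ≤ n) :
    ∀ r, 2 ≤ r → r ≤ n → r ^ r * tsylv g (n - r + 1) ^ (r + 1) < tsylv g n ^ 2 := by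
  intro r hr
  induction r, hr using Nat.le_induction with
  | base =>
      intro h2n
      have h1 : n - 2 + 1 = n - 1 := by omega
      rw [h1]
      set t := tsylv g (n-1) with hT
      have ht : 2 ≤ t := tsylv_ge_two g (n-1) hg (by omega)
      have hrec : tsylv g n = t * (t+1) := by
        rw [show n = n - 1 + 1 from by omega]
        exact tsylv_rec g (n-1) (by omega)
      rw [hrec]
      calc 2^2 * t^(2+1) = (4*t) * t^2 := by ring
        _ < (t+1)^2 * t^2 := mul_lt_mul_of_pos_right (sq_lt_aux t ht) (by positivity)
        _ = (t*(t+1))^2 := by ring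
  | succ r hr ih =>
      intro hrn
      have hIH := ih (by omega)
      have hm1 : n - (r+1) + 1 = n - r := by omega
      rw [hm1]
      set a := tsylv g (n - r) with hA
      have ha1 : 1 ≤ a := tsylv_ge_one g (n-r) hg (by omega)
      have hrecn : tsylv g (n - r + 1) = a * (a+1) := tsylv_rec g (n-r) (by omega)
      rw [hrecn] at hIH
      have hA' := pow_lemA r (by omega)
      have hC := pow_lemC r a (by omega) ha1
      calc (r+1)^(r+1) * a^(r+1+1)
          = ((r+1)^(r+1) * a) * a^(r+1) := by ring
        _ ≤ ((2^(r+1) * r^r) * a) * a^(r+1) :=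
            Nat.mul_le_mul (Nat.mul_le_mul_right _ hA') le_rfl
        _ = (r^r * (2^(r+1) * a)) * a^(r+1) := by ring
        _ ≤ (r^r * (a+1)^(r+1)) * a^(r+1) :=
            Nat.mul_le_mul (Nat.mul_le_mul_left _ hC) le_rfl
        _ = r^r * (a*(a+1))^(r+1) := by rw [mul_pow]; ring
        _ < tsylv g n ^ 2 := hIH

/-- For `g ≥ 1`, `n ≥ 3` and `1 ≤ r ≤ n` one has
`r^r · t_{g,n-r+1}^{r+1} ≤ t_{g,n}²`, with equality iff `r = 1`. -/
theorem sylvester_ineq_i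
    (g n : ℕ) (hg : 1 ≤ g) (hn : 3 ≤ n) :
    ∀ r, 1 ≤ r → r ≤ n →
      r ^ r * tsylv g (n - r + 1) ^ (r + 1) ≤ tsylv g n ^ 2 ∧
        (r ^ r * tsylv g (n - r + 1) ^ (r + 1) = tsylv g n ^ 2 ↔ r = 1) := by
  intro r h1 hrn
  rcases eq_or_lt_of_le h1 with heq | hlt
  · subst heq
    have hn1 : n - 1 + 1 = n := by omega
    rw [hn1]
    constructor
    · simp [pow_succ]
    · simp [pow_succ]
  · have h2 : 2 ≤ r := hlt
    have hstrict := sylvester_strict g n hg hn r h2 hrn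
    refine ⟨le_of_lt hstrict, ?_, ?_⟩
    · intro heq; exact absurd heq (ne_of_lt hstrict)
    · intro hr1; omega
end

section
/- Let g ≥ 1 and n ≥ 1. For any unit fraction partition A = (α₁,…,αₙ) of g with α₁ ≤ ⋯ ≤ αₙ, the point (1/α₁, …, 1/αₙ) is contained in A_g^n. -/
open Finset

/-- The product `x₁⋯x_k` of the first `k` coordinates. -/
def prodHead {n : ℕ} (x : Fin n → ℝ) (k : ℕ) : ℝ :=
  ∏ i ∈ Finset.univ.filter (fun i : Fin n => i.val < k), x i

/-- The sum `x_{k+1} + ⋯ + xₙ` of the last `n - k` coordinates. -/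
def sumTail {n : ℕ} (x : Fin n → ℝ) (k : ℕ) : ℝ :=
  ∑ i ∈ Finset.univ.filter (fun i : Fin n => k ≤ i.val), x i

/-- The compact set `A_g^n` of points `x ∈ ℝⁿ` with `x₁ ≥ ⋯ ≥ xₙ ≥ 0`,
`x₁ + ⋯ + xₙ = 1/g` and `x₁⋯x_k ≤ g(x_{k+1} + ⋯ + xₙ)` for `k = 1,…,n-1`. -/
def Agn (g n : ℕ) : Set (Fin n → ℝ) :=
  {x | Antitone x ∧ (∀ i, 0 ≤ x i) ∧ (∑ i, x i) = 1 / (g : ℝ) ∧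
    ∀ k, 1 ≤ k → k ≤ n - 1 → prodHead x k ≤ (g : ℝ) * sumTail x k}

/-- `A` is a unit fraction partition of `g`: a tuple of positive integers with
`1/g = ∑ 1/αᵢ`. -/
def IsUFP {n : ℕ} (g : ℕ) (A : Fin n → ℕ) : Prop :=
  (∀ i, 0 < A i) ∧ (1 : ℚ) / (g : ℚ) = ∑ i, (1 : ℚ) / (A i : ℚ)


lemma ufp_key (g n k : ℕ) (hg : 1 ≤ g) (hk1 : 1 ≤ k) (hkn : k ≤ n - 1) (hn : 1 ≤ n)
    (A : Fin n → ℕ) (hpos : ∀ i, 0 < A i)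
    (hsum : (1 : ℚ) / (g : ℚ) = ∑ i, (1 : ℚ) / (A i : ℚ)) :
    (1 : ℚ) / (∏ i ∈ univ.filter (fun i : Fin n => i.val < k), (A i : ℚ))
      ≤ (g : ℚ) * ∑ i ∈ univ.filter (fun i : Fin n => k ≤ i.val), (1 : ℚ) / (A i : ℚ) := by
  set S : Finset (Fin n) := univ.filter (fun i : Fin n => i.val < k) with hS
  set T : Finset (Fin n) := univ.filter (fun i : Fin n => k ≤ i.val) with hT
  have hApos : ∀ i, (0 : ℚ) < (A i : ℚ) := fun i => by exact_mod_cast hpos i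
  have hAne : ∀ i, (A i : ℚ) ≠ 0 := fun i => (hApos i).ne'
  have hgQ : (0 : ℚ) < (g : ℚ) := by exact_mod_cast hg
  set P : ℚ := ∏ i ∈ S, (A i : ℚ) with hPdef
  have hPpos : 0 < P := Finset.prod_pos fun i _ => hApos i
  set q : ℚ := ∑ i ∈ T, (1 : ℚ) / (A i : ℚ) with hqdef
  have hsplit : (∑ i, (1 : ℚ) / (A i : ℚ)) = (∑ i ∈ S, (1:ℚ)/(A i : ℚ)) + q := by
    rw [hqdef, hS, hT]
    have : (univ.filter (fun i : Fin n => k ≤ i.val)) =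
        univ.filter (fun i : Fin n => ¬ i.val < k) := by
      apply Finset.filter_congr; intro i _; simp [not_lt]
    rw [this]
    exact (Finset.sum_filter_add_sum_filter_not univ _ _).symm
  have hq : q = 1 / (g:ℚ) - ∑ i ∈ S, (1:ℚ)/(A i : ℚ) := by
    rw [hsum, hsplit]; ring
  have hkn' : k < n := lt_of_le_of_lt hkn (Nat.sub_lt hn one_pos)
  have hTne : T.Nonempty := ⟨⟨k, hkn'⟩, by simp [hT]⟩
  have hqpos : 0 < q :=
    Finset.sum_pos (fun i _ => one_div_pos.mpr (hApos i)) hTne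
  set z : ℤ := (∏ i ∈ S, (A i : ℤ)) - g * ∑ i ∈ S, ∏ j ∈ S.erase i, (A j : ℤ) with hzdef
  have hmain : (g:ℚ) * P * q = P - (g:ℚ) * ∑ i ∈ S, ∏ j ∈ S.erase i, (A j : ℚ) := by
    rw [hq, mul_sub]
    congr 1
    · field_simp
    · rw [Finset.mul_sum, Finset.mul_sum]
      refine Finset.sum_congr rfl fun i hi => ?_
      have h2 : P = (A i : ℚ) * ∏ j ∈ S.erase i, (A j : ℚ) :=
        (Finset.mul_prod_erase S _ hi).symm
      rw [mul_one_div, h2, mul_comm ((A i : ℚ)), ← mul_assoc,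
        mul_div_assoc, div_self (hAne i), mul_one]
  have hzq : (z : ℚ) = g * P * q := by
    rw [hmain, hzdef]
    push_cast
    ring
  have hz1 : (1 : ℚ) ≤ g * P * q := by
    rw [← hzq]
    have h0 : (0:ℚ) < (z:ℚ) := by rw [hzq]; positivity
    exact_mod_cast (by exact_mod_cast h0 : 0 < z)
  rw [div_le_iff₀ hPpos]
  nlinarith [hz1]

/-- For `g ≥ 1`, `n ≥ 1` and any unit fraction partition
`A = (α₁,…,αₙ)` of `g` with `α₁ ≤ ⋯ ≤ αₙ`, the point `(1/α₁,…,1/αₙ)` lies in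
`A_g^n`. -/
theorem ufp_point_mem_Agn
    (g n : ℕ) (hg : 1 ≤ g) (hn : 1 ≤ n)
    (A : Fin n → ℕ) (hA : IsUFP g A) (hmono : Monotone A) :
    (fun i => 1 / (A i : ℝ)) ∈ Agn g n := by
  obtain ⟨hpos, hsum⟩ := hA
  have hApos : ∀ i, (0 : ℝ) < (A i : ℝ) := fun i => by exact_mod_cast hpos i
  refine ⟨?_, ?_, ?_, ?_⟩
  · intro i j hij
    exact one_div_le_one_div_of_le (hApos i) (by exact_mod_cast hmono hij)
  · intro i
    positivity
  · have := congrArg (fun q : ℚ => (q : ℝ)) hsum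
    push_cast at this
    exact this.symm
  · intro k hk1 hk2
    have hQ := ufp_key g n k hg hk1 hk2 hn A hpos hsum
    simp only [prodHead, sumTail]
    have hprod : (∏ i ∈ univ.filter (fun i : Fin n => i.val < k), (1 : ℝ) / (A i : ℝ))
        = 1 / ∏ i ∈ univ.filter (fun i : Fin n => i.val < k), (A i : ℝ) := by
      simp [one_div, Finset.prod_inv_distrib]
    rw [hprod]
    have hR := (Rat.cast_le (K := ℝ)).mpr hQ
    push_cast at hR
    exact_mod_cast hR
end

section
/- Let g ≥ 1, n ≥ 3 and k ∈ {1,…,n}. If y = (y₁,…,yₙ) ∈ A_g^n satisfies f_k(y) ≤ f_k(x) for all x ∈ A_g^n (i.e., f_k attains its minimum on A_g^n at y), then y = y(g,n,i₀) for some i₀ ≤ k. -/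
open Finset

/-- The point `y(g,n,k) ∈ A_g^n`: its first `k-1` coordinates are
`1/s_{g,1},…,1/s_{g,k-1}` and its last `n-k+1` coordinates all equal
`1/((n-k+1)·t_{g,k})`. -/
noncomputable def ypt (g n k : ℕ) : Fin n → ℝ := fun i =>
  if i.val + 1 ≤ k - 1 then 1 / (sylv g (i.val + 1) : ℝ)
  else 1 / (((n - k + 1 : ℕ) : ℝ) * (tsylv g k : ℝ))

section AUX
open Finset
namespace S18

variable {n : ℕ}

/-- cardinality of an interval-type filter on `Fin n` -/
lemma cardIco (a b : ℕ) :
    ((univ : Finset (Fin n)).filter (fun i => a ≤ i.val ∧ i.val < b)).card = min b n - min a n := by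
  have h1 : ((univ : Finset (Fin n)).filter (fun i => a ≤ i.val ∧ i.val < b)).card
      = ((Finset.range n).filter (fun v => a ≤ v ∧ v < b)).card := by
    apply Finset.card_bij (fun i _ => i.val)
    · intro i hi; simp at hi ⊢; omega
    · intro i _ j _ h; exact Fin.val_injective h
    · intro v hv; simp at hv; exact ⟨⟨v, hv.1⟩, by simp; omega, rfl⟩
  have h2 : ((Finset.range n).filter (fun v => a ≤ v ∧ v < b)) = Finset.Ico (min a n) (min b n) := by
    ext v; simp [Finset.mem_Ico]; omega
  rw [h1, h2, Nat.card_Ico]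

lemma card_lt (b : ℕ) :
    ((univ : Finset (Fin n)).filter (fun i => i.val < b)).card = min b n := by
  have := cardIco (n := n) 0 b
  simpa using this

lemma card_ge (a : ℕ) :
    ((univ : Finset (Fin n)).filter (fun i => a ≤ i.val)).card = n - min a n := by
  have h1 : ((univ : Finset (Fin n)).filter (fun i => a ≤ i.val))
      = ((univ : Finset (Fin n)).filter (fun i => a ≤ i.val ∧ i.val < n)) := by
    ext i; simp [i.isLt]
  rw [h1, cardIco]; omega

lemma PH_zero (x : Fin n → ℝ) : prodHead x 0 = 1 := by
  unfold prodHead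
  have : (univ : Finset (Fin n)).filter (fun i => i.val < 0) = ∅ := by
    ext i; simp
  rw [this, Finset.prod_empty]

lemma ST_zero (x : Fin n → ℝ) : sumTail x 0 = ∑ i, x i := by
  unfold sumTail
  have : (univ : Finset (Fin n)).filter (fun i => 0 ≤ i.val) = univ := by ext i; simp
  rw [this]

lemma PH_succ (x : Fin n → ℝ) (m : ℕ) (hm : m < n) :
    prodHead x (m + 1) = prodHead x m * x ⟨m, hm⟩ := by
  unfold prodHead
  have : (univ : Finset (Fin n)).filter (fun i => i.val < m + 1)
      = insert ⟨m, hm⟩ ((univ : Finset (Fin n)).filter (fun i => i.val < m)) := by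
    ext i; simp [Fin.ext_iff]; omega
  rw [this, Finset.prod_insert (by simp)]
  ring

lemma ST_succ (x : Fin n → ℝ) (m : ℕ) (hm : m < n) :
    sumTail x m = x ⟨m, hm⟩ + sumTail x (m + 1) := by
  unfold sumTail
  have : (univ : Finset (Fin n)).filter (fun i => m ≤ i.val)
      = insert ⟨m, hm⟩ ((univ : Finset (Fin n)).filter (fun i => m + 1 ≤ i.val)) := by
    ext i; simp [Fin.ext_iff]; omega
  rw [this, Finset.sum_insert (by simp)]

lemma ST_stop (x : Fin n → ℝ) (m : ℕ) (hm : n ≤ m) : sumTail x m = 0 := by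
  unfold sumTail
  have : (univ : Finset (Fin n)).filter (fun i => m ≤ i.val) = ∅ := by
    ext i; simp; omega
  rw [this, Finset.sum_empty]

lemma PH_congr (x y : Fin n → ℝ) (m : ℕ) (h : ∀ i : Fin n, i.val < m → x i = y i) :
    prodHead x m = prodHead y m := by
  unfold prodHead
  apply Finset.prod_congr rfl
  intro i hi; simp at hi; exact h i hi

lemma ST_congr (x y : Fin n → ℝ) (m : ℕ) (h : ∀ i : Fin n, m ≤ i.val → x i = y i) :
    sumTail x m = sumTail y m := by
  unfold sumTail
  apply Finset.sum_congr rfl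
  intro i hi; simp at hi; exact h i hi

lemma PH_nonneg (x : Fin n → ℝ) (m : ℕ) (h : ∀ i, 0 ≤ x i) : 0 ≤ prodHead x m :=
  Finset.prod_nonneg (fun i _ => h i)

lemma PH_pos (x : Fin n → ℝ) (m : ℕ) (h : ∀ i, 0 < x i) : 0 < prodHead x m :=
  Finset.prod_pos (fun i _ => h i)

lemma PH_le_one (x : Fin n → ℝ) (m : ℕ) (h0 : ∀ i, 0 ≤ x i) (h1 : ∀ i, x i ≤ 1) :
    prodHead x m ≤ 1 :=
  Finset.prod_le_one (fun i _ => h0 i) (fun i _ => h1 i)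

lemma ST_nonneg (x : Fin n → ℝ) (m : ℕ) (h : ∀ i, 0 ≤ x i) : 0 ≤ sumTail x m :=
  Finset.sum_nonneg (fun i _ => h i)

end S18

section ANTI
open Finset
namespace S18
variable {n : ℕ}

lemma antitone_of_adjacent (x : Fin n → ℝ)
    (hadj : ∀ m : ℕ, ∀ hm : m + 1 < n, x ⟨m + 1, hm⟩ ≤ x ⟨m, Nat.lt_of_succ_lt hm⟩) : Antitone x := by
  have key : ∀ d m : ℕ, ∀ h : m + d < n, x ⟨m + d, h⟩ ≤ x ⟨m, by omega⟩ := by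
    intro d
    induction d with
    | zero => intro m h; exact le_of_eq (congrArg x (Fin.ext rfl))
    | succ d ih =>
      intro m h
      have h1 : x ⟨m + d + 1, by omega⟩ ≤ x ⟨m + d, by omega⟩ := hadj (m + d) (by omega)
      have h2 : x ⟨m + (d + 1), h⟩ = x ⟨m + d + 1, by omega⟩ := congrArg x (Fin.ext (by simp; omega))
      rw [h2]
      exact le_trans h1 (ih m (by omega))
  intro a b hab
  have hab' : a.val ≤ b.val := hab
  have h1 : x b = x ⟨a.val + (b.val - a.val), by omega⟩ := congrArg x (Fin.ext (by simp; omega))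
  have h2 : x a = x ⟨a.val, a.isLt⟩ := congrArg x (Fin.ext rfl)
  rw [h1, h2]
  exact key (b.val - a.val) a.val (by omega)

lemma const_of_no_drop (x : Fin n → ℝ) (hn : 0 < n) (hA : Antitone x)
    (h : ∀ m : ℕ, ∀ hm : m + 1 < n, ¬ (x ⟨m + 1, hm⟩ < x ⟨m, Nat.lt_of_succ_lt hm⟩)) :
    ∀ i : Fin n, x i = x ⟨0, hn⟩ := by
  intro i
  have key : ∀ m : ℕ, ∀ hm : m < n, x ⟨m, hm⟩ = x ⟨0, hn⟩ := by
    intro m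
    induction m with
    | zero => intro hm; rfl
    | succ m ih =>
      intro hm
      have h1 : x ⟨m + 1, hm⟩ ≤ x ⟨m, by omega⟩ := hA (by simp [Fin.mk_le_mk])
      have h2 := h m hm
      have heq : x ⟨m + 1, hm⟩ = x ⟨m, by omega⟩ := by
        rcases lt_or_eq_of_le h1 with h' | h'
        · exact absurd h' h2
        · exact h'
      rw [heq, ih]
  have h1 : x i = x ⟨i.val, i.isLt⟩ := congrArg x (Fin.ext rfl)
  rw [h1, key i.val i.isLt]

lemma eq_on_no_drop (x : Fin n → ℝ) (hA : Antitone x) (a b : ℕ) (hab : a ≤ b) (hb : b < n)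
    (h : ∀ m : ℕ, a ≤ m → m + 1 ≤ b → ∀ hm : m + 1 < n, ¬ (x ⟨m + 1, hm⟩ < x ⟨m, Nat.lt_of_succ_lt hm⟩)) :
    x ⟨b, hb⟩ = x ⟨a, lt_of_le_of_lt hab hb⟩ := by
  induction b with
  | zero => have : a = 0 := by omega
            subst this; rfl
  | succ b ih =>
    rcases Nat.lt_or_ge a (b+1) with hlt | hge
    · have hab' : a ≤ b := by omega
      have hb' : b < n := by omega
      have h1 : x ⟨b + 1, hb⟩ ≤ x ⟨b, hb'⟩ := hA (by simp [Fin.mk_le_mk])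
      have h2 := h b hab' (by omega) hb
      have heq : x ⟨b + 1, hb⟩ = x ⟨b, hb'⟩ := by
        rcases lt_or_eq_of_le h1 with h' | h'
        · exact absurd h' h2
        · exact h'
      rw [heq]
      exact ih hab' hb' (fun m hm1 hm2 hm3 => h m hm1 (by omega) hm3)
    · have : a = b + 1 := by omega
      subst this; rfl

end S18
end ANTI

section MEMB
open Finset
namespace S18
variable {n : ℕ}

lemma gpos {g : ℕ} (hg : 1 ≤ g) : (0:ℝ) < (g:ℝ) := by
  exact_mod_cast Nat.lt_of_lt_of_le Nat.zero_lt_one hg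

lemma mem_def {g : ℕ} {x : Fin n → ℝ} (hx : x ∈ Agn g n) :
    Antitone x ∧ (∀ i, 0 ≤ x i) ∧ (∑ i, x i) = 1 / (g : ℝ) ∧
    ∀ k, 1 ≤ k → k ≤ n - 1 → prodHead x k ≤ (g : ℝ) * sumTail x k := hx

/-- all coordinates of a point of `Agn` are strictly positive -/
lemma pos_of_mem {g : ℕ} {x : Fin n → ℝ} (hg : 1 ≤ g) (hx : x ∈ Agn g n) :
    ∀ i, 0 < x i := by
  obtain ⟨hA, hNN, hS, hC⟩ := hx
  by_contra hcon
  push_neg at hcon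
  obtain ⟨i0, hi0⟩ := hcon
  have hEx : ∃ m : ℕ, ∃ h : m < n, x ⟨m, h⟩ ≤ 0 := ⟨i0.val, i0.isLt, by
    have : x ⟨i0.val, i0.isLt⟩ = x i0 := congrArg x (Fin.ext rfl)
    rw [this]; exact hi0⟩
  classical
  set m0 := Nat.find hEx with hm0def
  obtain ⟨hm0lt, hm0le⟩ := Nat.find_spec hEx
  have hprev : ∀ l : ℕ, l < m0 → ∀ h : l < n, 0 < x ⟨l, h⟩ := by
    intro l hl h
    have := Nat.find_min hEx hl
    push_neg at this
    have := this h
    linarith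
  have htail : ∀ i : Fin n, m0 ≤ i.val → x i = 0 := by
    intro i hi
    have h1 : x i ≤ x ⟨m0, hm0lt⟩ := hA (by simp [Fin.le_def]; omega)
    have h2 := hNN i
    have h3 : x ⟨m0, hm0lt⟩ ≤ 0 := hm0le
    linarith
  have hstz : sumTail x m0 = 0 := by
    unfold sumTail
    apply Finset.sum_eq_zero
    intro i hi; simp at hi; exact htail i hi
  rcases Nat.eq_zero_or_pos m0 with h0 | hpos
  · -- m0 = 0 : total sum is zero
    have : (∑ i, x i) = 0 := by
      rw [← ST_zero, ← h0]; exact hstz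
    rw [hS] at this
    have hzz : (1:ℝ)/(g:ℝ) ≠ 0 := by
      have := gpos hg; positivity
    exact hzz this
  · -- constraint at m0 gives positive product ≤ 0
    have hcons := hC m0 hpos (by omega)
    rw [hstz, mul_zero] at hcons
    have hppos : 0 < prodHead x m0 := by
      unfold prodHead
      apply Finset.prod_pos
      intro i hi; simp at hi
      have : x i = x ⟨i.val, i.isLt⟩ := congrArg x (Fin.ext rfl)
      rw [this]
      exact hprev i.val hi i.isLt
    linarith

lemma sum_eq_ST {g : ℕ} {x : Fin n → ℝ} (hx : x ∈ Agn g n) :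
    sumTail x 0 = 1 / (g:ℝ) := by
  rw [ST_zero]; exact hx.2.2.1

lemma PH_one (x : Fin n → ℝ) (h : 0 < n) : prodHead x 1 = x ⟨0, h⟩ := by
  rw [PH_succ x 0 h, PH_zero, one_mul]

/-- first coordinate is at most 1/(g+1) (needs n ≥ 2) -/
lemma head_le {g : ℕ} {x : Fin n → ℝ} (hg : 1 ≤ g) (hn : 2 ≤ n) (hx : x ∈ Agn g n) :
    x ⟨0, by omega⟩ ≤ 1 / ((g:ℝ) + 1) := by
  obtain ⟨hA, hNN, hS, hC⟩ := hx
  have hc := hC 1 le_rfl (by omega)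
  rw [PH_one x (by omega)] at hc
  have hT : sumTail x 1 = 1/(g:ℝ) - x ⟨0, by omega⟩ := by
    have := ST_succ x 0 (by omega)
    rw [ST_zero] at this
    rw [hS] at this
    linarith
  rw [hT] at hc
  have hgp := gpos hg
  have hgg : (g:ℝ) * (1/(g:ℝ)) = 1 := by field_simp
  rw [le_div_iff₀ (by linarith)]
  nlinarith

lemma coord_lt_one {g : ℕ} {x : Fin n → ℝ} (hg : 1 ≤ g) (hn : 2 ≤ n) (hx : x ∈ Agn g n) :
    ∀ i, x i < 1 := by
  intro i
  have h1 : x i ≤ x ⟨0, by omega⟩ := hx.1 (by simp [Fin.le_def])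
  have h2 := head_le hg hn hx
  have hgp := gpos hg
  have : 1 / ((g:ℝ)+1) < 1 := by
    rw [div_lt_one (by linarith)]; linarith
  linarith

lemma coord_le_one {g : ℕ} {x : Fin n → ℝ} (hg : 1 ≤ g) (hx : x ∈ Agn g n) :
    ∀ i, x i ≤ 1 := by
  intro i
  rcases Nat.lt_or_ge n 2 with h | h
  · -- n = 1 (n=0 impossible with i)
    have hn1 : n = 1 := by have := i.isLt; omega
    subst hn1
    have : x i = ∑ j, x j := by
      rw [Fin.sum_univ_one]
      exact congrArg x (Subsingleton.elim _ _)
    rw [this, hx.2.2.1]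
    have := gpos hg
    rw [div_le_one (by linarith)]
    exact_mod_cast hg
  · exact le_of_lt (coord_lt_one hg h hx i)

end S18
end MEMB

section FLAT
open Finset
namespace S18
variable {n : ℕ}

lemma sum_head_tail (x : Fin n → ℝ) (m : ℕ) :
    ∑ i, x i = (∑ i ∈ univ.filter (fun i : Fin n => i.val < m), x i) + sumTail x m := by
  unfold sumTail
  rw [← Finset.sum_filter_add_sum_filter_not univ (fun i : Fin n => i.val < m) x]
  congr 1
  apply Finset.sum_congr _ (fun _ _ => rfl)
  ext i; simp; try omega

lemma ST_split (x : Fin n → ℝ) (i m : ℕ) (him : i ≤ m) :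
    sumTail x i = (∑ j ∈ univ.filter (fun j : Fin n => i ≤ j.val ∧ j.val < m), x j) + sumTail x m := by
  unfold sumTail
  rw [← Finset.sum_filter_add_sum_filter_not (univ.filter (fun j : Fin n => i ≤ j.val))
    (fun j : Fin n => j.val < m) x]
  congr 1
  · apply Finset.sum_congr _ (fun _ _ => rfl)
    ext j; simp; try omega
  · apply Finset.sum_congr _ (fun _ _ => rfl)
    ext j; simp; try omega

lemma PH_split (x : Fin n → ℝ) (i m : ℕ) (him : m ≤ i) :
    prodHead x i = prodHead x m * ∏ j ∈ univ.filter (fun j : Fin n => m ≤ j.val ∧ j.val < i), x j := by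
  unfold prodHead
  rw [← Finset.prod_filter_mul_prod_filter_not (univ.filter (fun j : Fin n => j.val < i))
    (fun j : Fin n => j.val < m) x]
  congr 1
  · apply Finset.prod_congr _ (fun _ _ => rfl)
    ext j; simp; try omega
  · apply Finset.prod_congr _ (fun _ _ => rfl)
    ext j; simp; try omega

lemma ST_pos {g : ℕ} {x : Fin n → ℝ} (hg : 1 ≤ g) (hx : x ∈ Agn g n) (m : ℕ) (hm : m < n) :
    0 < sumTail x m := by
  unfold sumTail
  apply Finset.sum_pos
  · intro i _; exact pos_of_mem hg hx i
  · exact ⟨⟨m, hm⟩, by simp⟩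

/-- the flattened point: first `m` coordinates of `x`, the rest averaged out -/
noncomputable def flat (x : Fin n → ℝ) (m : ℕ) : Fin n → ℝ := fun i =>
  if i.val < m then x i else sumTail x m / ((n - m : ℕ) : ℝ)

lemma flat_tail_card (m i : ℕ) (hmi : m ≤ i) (hin : i ≤ n) :
    ((univ : Finset (Fin n)).filter (fun j => m ≤ j.val ∧ j.val < i)).card = i - m := by
  rw [cardIco]; omega

lemma flat_spec {g : ℕ} {x : Fin n → ℝ} (hg : 1 ≤ g) (hx : x ∈ Agn g n)
    (m : ℕ) (hm : m + 1 ≤ n) :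
    flat x m ∈ Agn g n ∧
    (∀ i : ℕ, i ≤ m → prodHead (flat x m) i = prodHead x i) ∧
    (∀ i : ℕ, m ≤ i → i ≤ n →
      prodHead (flat x m) i = prodHead x m * (sumTail x m / ((n - m : ℕ) : ℝ)) ^ (i - m)) := by
  obtain ⟨hA, hNN, hS, hC⟩ := id hx
  have hpos := pos_of_mem hg hx
  have hone := coord_le_one hg hx
  set u : ℝ := sumTail x m / ((n - m : ℕ) : ℝ) with hu
  have hcard : (0:ℝ) < ((n - m : ℕ) : ℝ) := by
    have : 1 ≤ n - m := by omega
    exact_mod_cast Nat.lt_of_lt_of_le Nat.zero_lt_one this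
  have hupos : 0 < u := div_pos (ST_pos hg hx m (by omega)) hcard
  have hule : u ≤ x ⟨m, by omega⟩ := by
    rw [hu, div_le_iff₀ hcard]
    have hbd : sumTail x m ≤ ((univ : Finset (Fin n)).filter (fun j => m ≤ j.val)).card • x ⟨m, by omega⟩ := by
      apply Finset.sum_le_card_nsmul
      intro i hi; simp at hi
      exact hA (by simp [Fin.le_def]; omega)
    rw [card_ge] at hbd
    have : min m n = m := by omega
    rw [this] at hbd
    simpa [nsmul_eq_mul, mul_comm] using hbd
  -- the three product formulas
  have hPHlow : ∀ i : ℕ, i ≤ m → prodHead (flat x m) i = prodHead x i := by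
    intro i hi
    apply PH_congr
    intro j hj
    simp only [flat]
    rw [if_pos (by omega)]
  have hPHhigh : ∀ i : ℕ, m ≤ i → i ≤ n →
      prodHead (flat x m) i = prodHead x m * u ^ (i - m) := by
    intro i hmi hin
    rw [PH_split (flat x m) i m hmi, hPHlow m le_rfl]
    congr 1
    rw [Finset.prod_congr rfl (fun j hj => ?_), Finset.prod_const, flat_tail_card m i hmi hin]
    simp at hj
    simp only [flat]
    rw [if_neg (by omega)]
  have hSThigh : ∀ i : ℕ, m ≤ i → sumTail (flat x m) i = ((n - i : ℕ) : ℝ) * u := by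
    intro i hmi
    unfold sumTail
    rw [Finset.sum_congr rfl (fun j hj => ?_), Finset.sum_const, card_ge, nsmul_eq_mul]
    · rcases Nat.lt_or_ge i n with h | h
      · congr 2; omega
      · have h1 : n - min i n = 0 := by omega
        have h2 : n - i = 0 := by omega
        rw [h1, h2]
    · simp at hj
      simp only [flat]
      rw [if_neg (by omega)]
  have hSTlow : ∀ i : ℕ, i ≤ m → sumTail (flat x m) i = sumTail x i := by
    intro i hi
    rw [ST_split (flat x m) i m hi, ST_split x i m hi]
    congr 1
    · apply Finset.sum_congr rfl
      intro j hj; simp at hj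
      simp only [flat]; rw [if_pos (by omega)]
    · rw [hSThigh m le_rfl, hu]
      field_simp
  have humem : flat x m ∈ Agn g n := by
    refine ⟨?_, ?_, ?_, ?_⟩
    · -- antitone
      apply antitone_of_adjacent
      intro l hl
      simp only [flat]
      rcases Nat.lt_or_ge (l+1) m with h1 | h1
      · rw [if_pos h1, if_pos (by omega)]
        exact hA (by simp [Fin.le_def])
      · rw [if_neg (by omega)]
        rcases Nat.lt_or_ge l m with h2 | h2
        · rw [if_pos h2]
          have h3 : l = m - 1 := by omega
          calc u ≤ x ⟨m, by omega⟩ := hule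
            _ ≤ x ⟨l, by omega⟩ := hA (by simp [Fin.le_def]; omega)
        · rw [if_neg (by omega)]
    · intro i
      simp only [flat]
      split_ifs
      · exact hNN i
      · linarith
    · rw [← ST_zero, hSTlow 0 (by omega), ST_zero, hS]
    · intro i hi1 hi2
      rcases Nat.lt_or_ge m i with h | h
      · -- i > m
        rw [hPHhigh i (by omega) (by omega), hSThigh i (by omega)]
        have hstep1 : prodHead x m * u ^ (i - m) ≤ u ^ (i - m) := by
          have : prodHead x m ≤ 1 := PH_le_one x m (fun j => le_of_lt (hpos j)) hone
          nlinarith [pow_pos hupos (i - m), PH_nonneg x m (fun j => le_of_lt (hpos j))]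
        have hstep2 : u ^ (i - m) ≤ u := by
          have hd : i - m = (i - m - 1) + 1 := by omega
          rw [hd, pow_succ]
          have hule1 : u ≤ 1 := by
            calc u ≤ x ⟨m, by omega⟩ := hule
              _ ≤ 1 := hone _
          nlinarith [pow_le_one₀ (le_of_lt hupos) hule1 (n := i - m - 1), pow_pos hupos (i - m - 1)]
        have hstep3 : u ≤ (g:ℝ) * (((n - i : ℕ):ℝ) * u) := by
          have h1 : (1:ℝ) ≤ (g:ℝ) := by exact_mod_cast hg
          have h2 : (1:ℝ) ≤ ((n - i : ℕ):ℝ) := by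
            have : 1 ≤ n - i := by omega
            exact_mod_cast this
          nlinarith [mul_le_mul h1 h2 (by norm_num) (by linarith : (0:ℝ) ≤ (g:ℝ))]
        linarith
      · -- i ≤ m : same constraint as x
        rw [hPHlow i (by omega), hSTlow i (by omega)]
        exact hC i hi1 hi2
  exact ⟨humem, hPHlow, hPHhigh⟩

end S18
end FLAT

section TAIL
open Finset
namespace S18
variable {n : ℕ}

lemma tailconst {g k : ℕ} {y : Fin n → ℝ} (hg : 1 ≤ g) (hk1 : 1 ≤ k) (hk2 : k ≤ n)
    (hy : y ∈ Agn g n) (hmin : ∀ x ∈ Agn g n, prodHead y k ≤ prodHead x k) :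
    ∀ i : Fin n, k - 1 ≤ i.val → y i = y ⟨k - 1, by omega⟩ := by
  obtain ⟨m, rfl⟩ : ∃ m, k = m + 1 := ⟨k - 1, by omega⟩
  simp only [Nat.add_sub_cancel]
  have hpos := pos_of_mem hg hy
  have hmn : m + 1 ≤ n := hk2
  obtain ⟨hmem, hPHlow, hPHhigh⟩ := flat_spec hg hy m hmn
  set u : ℝ := sumTail y m / ((n - m : ℕ) : ℝ) with hu
  have hcard : (0:ℝ) < ((n - m : ℕ) : ℝ) := by
    have : 1 ≤ n - m := by omega
    exact_mod_cast Nat.lt_of_lt_of_le Nat.zero_lt_one this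
  have h1 : prodHead y (m+1) ≤ prodHead (flat y m) (m+1) := hmin _ hmem
  have h2 : prodHead (flat y m) (m+1) = prodHead y m * u ^ (m + 1 - m) := hPHhigh (m+1) (by omega) hk2
  have hkm : m + 1 - m = 1 := by omega
  rw [hkm, pow_one] at h2
  have h3 : prodHead y (m+1) = prodHead y m * y ⟨m, by omega⟩ := PH_succ y m (by omega)
  have hPm : 0 < prodHead y m := PH_pos y m hpos
  have hym_le_u : y ⟨m, by omega⟩ ≤ u := by
    rw [h3, h2] at h1
    exact le_of_mul_le_mul_left h1 hPm
  have hbd : sumTail y m ≤ ((n - m : ℕ) : ℝ) * y ⟨m, by omega⟩ := by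
    have hbd' : sumTail y m ≤ ((univ : Finset (Fin n)).filter (fun j => m ≤ j.val)).card • y ⟨m, by omega⟩ := by
      apply Finset.sum_le_card_nsmul
      intro i hi; simp at hi
      exact hy.1 (by simp [Fin.le_def]; omega)
    rw [card_ge] at hbd'
    have hmin' : min m n = m := by omega
    rw [hmin'] at hbd'
    simpa [nsmul_eq_mul, mul_comm] using hbd'
  have hu_le_ym : u ≤ y ⟨m, by omega⟩ := by
    rw [hu, div_le_iff₀ hcard]
    linarith [hbd]
  have hueq : u = y ⟨m, by omega⟩ := le_antisymm hu_le_ym hym_le_u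
  have heq : sumTail y m = ((n - m : ℕ) : ℝ) * y ⟨m, by omega⟩ := by
    rw [hu] at hueq
    field_simp at hueq
    linarith [hueq]
  intro i hi
  have hsum0 : ∑ j ∈ (univ : Finset (Fin n)).filter (fun j => m ≤ j.val),
      (y ⟨m, by omega⟩ - y j) = 0 := by
    rw [Finset.sum_sub_distrib, Finset.sum_const, card_ge]
    have hmin' : min m n = m := by omega
    rw [hmin', nsmul_eq_mul]
    unfold sumTail at heq
    rw [heq]; ring
  have hterm : ∀ j ∈ (univ : Finset (Fin n)).filter (fun j => m ≤ j.val),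
      0 ≤ y ⟨m, by omega⟩ - y j := by
    intro j hj; simp at hj
    have := hy.1 (show (⟨m, by omega⟩ : Fin n) ≤ j by simp [Fin.le_def]; omega)
    linarith
  have := (Finset.sum_eq_zero_iff_of_nonneg hterm).mp hsum0 i (by simp; exact hi)
  linarith
end S18
end TAIL

section UPD
open Finset
namespace S18
variable {n : ℕ}

/-- L6: a tight constraint forces a strict drop right after it;
equivalently adjacent equal coordinates force slackness. -/
lemma slack_of_eq {g : ℕ} {x : Fin n → ℝ} (hg : 1 ≤ g) (hx : x ∈ Agn g n)
    (m : ℕ) (hm : m + 2 ≤ n - 1) (heq : x ⟨m + 1, by omega⟩ = x ⟨m, by omega⟩) :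
    prodHead x (m + 1) < (g:ℝ) * sumTail x (m + 1) := by
  have hpos := pos_of_mem hg hx
  have hone := coord_le_one hg hx
  obtain ⟨hA, hNN, hS, hC⟩ := id hx
  have hle := hC (m+1) (by omega) (by omega)
  rcases lt_or_eq_of_le hle with h | h
  · exact h
  exfalso
  have hmn1 : m + 1 < n := by omega
  have hmn : m < n := by omega
  have hP2 : prodHead x (m+2) = prodHead x (m+1) * x ⟨m+1, hmn1⟩ := PH_succ x (m+1) hmn1
  have hS1 : sumTail x (m+1) = x ⟨m+1, hmn1⟩ + sumTail x (m+2) := ST_succ x (m+1) hmn1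
  have hP1 : prodHead x (m+1) = prodHead x m * x ⟨m, hmn⟩ := PH_succ x m hmn
  have heq' : x (⟨m+1, hmn1⟩ : Fin n) = x (⟨m, hmn⟩ : Fin n) := heq
  have hc2 := hC (m+2) (by omega) (by omega)
  have htpos : 0 < x (⟨m+1, hmn1⟩ : Fin n) := hpos _
  have htle : x (⟨m+1, hmn1⟩ : Fin n) ≤ 1 := hone _
  have hPmle : prodHead x m ≤ 1 := PH_le_one x m (fun j => le_of_lt (hpos j)) hone
  have hPmpos : 0 < prodHead x m := PH_pos x m hpos
  have hS2nn : 0 ≤ sumTail x (m+2) := ST_nonneg x (m+2) hNN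
  have hgR : (1:ℝ) ≤ (g:ℝ) := by exact_mod_cast hg
  rw [hP2, hP1] at hc2
  rw [hP1, hS1] at h
  rw [← heq'] at h hc2
  -- h : Pm * t = g * (t + S2),  hc2 : Pm * t * t ≤ g * S2
  nlinarith [h, hc2, htpos, htle, hPmpos, hPmle, hgR, hS2nn,
    mul_le_mul_of_nonneg_right hPmle
      (mul_nonneg (le_of_lt htpos) (by linarith : (0:ℝ) ≤ 1 - x (⟨m+1, hmn1⟩ : Fin n)))]

lemma sum_update (f : Fin n → ℝ) (c : Fin n) (w : ℝ) :
    ∑ i, Function.update f c w i = (∑ i, f i) + (w - f c) := by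
  rw [Finset.sum_update_of_mem (Finset.mem_univ c)]
  rw [← Finset.sum_erase_add univ f (Finset.mem_univ c)]
  have : univ \ {c} = univ.erase c := by
    ext j; simp [Finset.mem_erase, Finset.mem_sdiff]; try tauto
  rw [this]; ring

lemma ST_update_ge (f : Fin n → ℝ) (c : Fin n) (w : ℝ) (i : ℕ) (h : i ≤ c.val) :
    sumTail (Function.update f c w) i = sumTail f i + (w - f c) := by
  unfold sumTail
  have hc : c ∈ univ.filter (fun j : Fin n => i ≤ j.val) := by simp; omega
  rw [Finset.sum_update_of_mem hc]
  rw [← Finset.sum_erase_add _ f hc]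
  have : (univ.filter (fun j : Fin n => i ≤ j.val)) \ {c}
       = (univ.filter (fun j : Fin n => i ≤ j.val)).erase c := by
    ext j; simp [Finset.mem_erase, Finset.mem_sdiff]; try tauto
  rw [this]; ring

lemma ST_update_lt (f : Fin n → ℝ) (c : Fin n) (w : ℝ) (i : ℕ) (h : c.val < i) :
    sumTail (Function.update f c w) i = sumTail f i := by
  apply ST_congr
  intro j hj
  rw [Function.update_of_ne]
  intro hcon; rw [hcon] at hj; omega

lemma PH_one_update (x : Fin n → ℝ) (a : Fin n) (i : ℕ) (ha : a.val < i) :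
    ∃ R : ℝ, (∀ v : ℝ, prodHead (Function.update x a v) i = v * R) ∧
      prodHead x i = x a * R ∧ ((∀ j, 0 ≤ x j) → 0 ≤ R) := by
  classical
  set s := (univ : Finset (Fin n)).filter (fun j => j.val < i) with hs
  have has : a ∈ s := by simp [hs, ha]
  refine ⟨∏ j ∈ s.erase a, x j, ?_, ?_, ?_⟩
  · intro v
    unfold prodHead
    rw [← hs, ← Finset.mul_prod_erase s _ has]
    rw [Function.update_self]
    congr 1
    apply Finset.prod_congr rfl
    intro j hj
    rw [Function.update_of_ne (Finset.ne_of_mem_erase hj)]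
  · unfold prodHead
    rw [← hs, ← Finset.mul_prod_erase s _ has]
  · intro hNN
    exact Finset.prod_nonneg (fun j _ => hNN j)

lemma PH_two_update (x : Fin n → ℝ) (a b : Fin n) (hab : a ≠ b) (i : ℕ)
    (ha : a.val < i) (hb : b.val < i) :
    ∃ R : ℝ, (∀ v w : ℝ, prodHead (Function.update (Function.update x a v) b w) i = v * w * R) ∧
      prodHead x i = x a * x b * R ∧ ((∀ j, 0 ≤ x j) → 0 ≤ R) ∧ ((∀ j, 0 < x j) → 0 < R) := by
  classical
  set s := (univ : Finset (Fin n)).filter (fun j => j.val < i) with hs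
  have has : a ∈ s := by simp [hs, ha]
  have hbs : b ∈ s.erase a := by simp [hs, hb]; exact fun h => absurd h.symm hab
  refine ⟨∏ j ∈ (s.erase a).erase b, x j, ?_, ?_, ?_, ?_⟩
  · intro v w
    unfold prodHead
    rw [← hs, ← Finset.mul_prod_erase s _ has, ← Finset.mul_prod_erase (s.erase a) _ hbs, ← mul_assoc]
    have h1 : Function.update (Function.update x a v) b w a = v := by
      rw [Function.update_of_ne hab, Function.update_self]
    have h2 : Function.update (Function.update x a v) b w b = w := Function.update_self _ _ _
    rw [h1, h2]
    congr 1
    apply Finset.prod_congr rfl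
    intro j hj
    have hjb : j ≠ b := Finset.ne_of_mem_erase hj
    have hja : j ≠ a := Finset.ne_of_mem_erase (Finset.mem_of_mem_erase hj)
    rw [Function.update_of_ne hjb, Function.update_of_ne hja]
  · unfold prodHead
    rw [← hs, ← Finset.mul_prod_erase s _ has, ← Finset.mul_prod_erase (s.erase a) _ hbs, ← mul_assoc]
  · intro hNN
    exact Finset.prod_nonneg (fun j _ => hNN j)
  · intro hP
    exact Finset.prod_pos (fun j _ => hP j)

end S18
end UPD

section MOVE
open Finset
namespace S18
variable {n : ℕ}

set_option maxHeartbeats 1000000 in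
lemma move {g k : ℕ} {y : Fin n → ℝ} (hg : 1 ≤ g) (hk : k ≤ n)
    (hy : y ∈ Agn g n) (hmin : ∀ x ∈ Agn g n, prodHead y k ≤ prodHead x k)
    (q : ℕ) (hq1 : 1 ≤ q) (hqk : q + 1 ≤ k) (hqn : q + 1 < n)
    (hdrop : y ⟨q + 1, hqn⟩ < y ⟨q, Nat.lt_of_succ_lt hqn⟩)
    (hslack : ∀ i, 1 ≤ i → i ≤ q → prodHead y i < (g:ℝ) * sumTail y i) : False := by
  classical
  have h0n : 0 < n := by omega
  have hqn' : q < n := by omega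
  have hpos := pos_of_mem hg hy
  have hNN : ∀ j, 0 ≤ y j := fun j => le_of_lt (hpos j)
  have hA := hy.1
  have hgR : (0:ℝ) < (g:ℝ) := gpos hg
  set P0 : Fin n := ⟨0, h0n⟩ with hP0def
  set Q : Fin n := ⟨q, hqn'⟩ with hQdef
  set Q1 : Fin n := ⟨q+1, hqn⟩ with hQ1def
  have hP0Q : P0 ≠ Q := by
    simp [hP0def, hQdef, Fin.ext_iff]; omega
  have hy0pos : 0 < y P0 := hpos P0
  have hyQpos : 0 < y Q := hpos Q
  have hyQ_le : y Q ≤ y P0 := hA (by simp [hP0def, hQdef, Fin.le_def])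
  set gap : ℝ := y Q - y Q1 with hgapdef
  have hgap : 0 < gap := by simp [hgapdef]; exact hdrop
  -- the per-constraint bound
  set bound : ℕ → ℝ := fun i =>
    ((g:ℝ) * sumTail y i - prodHead y i) / ((g:ℝ) + prodHead y i / y P0) with hbounddef
  have hboundpos : ∀ i, 1 ≤ i → i ≤ q → 0 < bound i := by
    intro i h1 h2
    apply div_pos
    · linarith [hslack i h1 h2]
    · have := PH_nonneg y i hNN
      positivity
  have hIcc : (Finset.Icc 1 q).Nonempty := ⟨1, by simp [hq1]⟩
  set B : ℝ := (Finset.Icc 1 q).inf' hIcc bound with hBdef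
  have hBpos : 0 < B := by
    rw [hBdef, Finset.lt_inf'_iff]
    intro i hi
    simp at hi
    exact hboundpos i hi.1 hi.2
  set ε : ℝ := min B gap with hεdef
  have hεpos : 0 < ε := lt_min hBpos hgap
  have hεgap : ε ≤ gap := min_le_right _ _
  have hεB : ∀ i, 1 ≤ i → i ≤ q → ε ≤ bound i := by
    intro i h1 h2
    calc ε ≤ B := min_le_left _ _
      _ ≤ bound i := Finset.inf'_le bound (by simp; omega)
  -- the perturbed point
  set xp : Fin n → ℝ := Function.update (Function.update y P0 (y P0 + ε)) Q (y Q - ε) with hxpdef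
  have hxval : ∀ j : Fin n, xp j = if j = Q then y Q - ε else if j = P0 then y P0 + ε else y j := by
    intro j
    rw [hxpdef, Function.update_apply, Function.update_apply]
  have hxQ : xp Q = y Q - ε := by rw [hxval]; simp
  have hxP0 : xp P0 = y P0 + ε := by rw [hxval, if_neg hP0Q, if_pos rfl]
  have hxother : ∀ j : Fin n, j ≠ Q → j ≠ P0 → xp j = y j := by
    intro j h1 h2; rw [hxval, if_neg h1, if_neg h2]
  -- membership of the perturbed point
  have hxmem : xp ∈ Agn g n := by
    obtain ⟨hA', hNN', hS', hC'⟩ := id hy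
    refine ⟨?_, ?_, ?_, ?_⟩
    · -- antitone
      apply antitone_of_adjacent
      intro m hm
      have e1 : ∀ (h : m < n), xp ⟨m, h⟩ ≤ xp ⟨m, h⟩ := fun _ => le_rfl
      by_cases hmq : m = q
      · -- next coordinate is y ⟨q+1⟩ (can't be P0 or Q)
        have hne1 : (⟨m+1, hm⟩ : Fin n) ≠ Q := by simp [hQdef, Fin.ext_iff]; omega
        have hne2 : (⟨m+1, hm⟩ : Fin n) ≠ P0 := by simp [hP0def, Fin.ext_iff]
        have hQeq : (⟨m, by omega⟩ : Fin n) = Q := by simp [hQdef, Fin.ext_iff]; omega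
        rw [hxother _ hne1 hne2, hQeq, hxQ]
        have hyy : y (⟨m+1, hm⟩ : Fin n) = y Q1 := by
          congr 1
          simp [hQ1def, Fin.ext_iff]; omega
        rw [hyy]
        simp only [hgapdef] at hεgap
        linarith
      · by_cases hm1q : m + 1 = q
        · have hQeq : (⟨m+1, hm⟩ : Fin n) = Q := by simp [hQdef, Fin.ext_iff]; omega
          rw [hQeq, hxQ]
          by_cases hm0 : m = 0
          · have hPeq : (⟨m, by omega⟩ : Fin n) = P0 := by simp [hP0def, Fin.ext_iff]; omega
            rw [hPeq, hxP0]
            linarith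
          · have hne1 : (⟨m, by omega⟩ : Fin n) ≠ Q := by simp [hQdef, Fin.ext_iff]; omega
            have hne2 : (⟨m, by omega⟩ : Fin n) ≠ P0 := by simp [hP0def, Fin.ext_iff]; omega
            rw [hxother _ hne1 hne2]
            have : y Q ≤ y ⟨m, by omega⟩ := hA (by simp [hQdef, Fin.le_def]; omega)
            linarith
        · -- neither end is Q
          have hne1 : (⟨m+1, hm⟩ : Fin n) ≠ Q := by simp [hQdef, Fin.ext_iff]; omega
          have hne2 : (⟨m+1, hm⟩ : Fin n) ≠ P0 := by simp [hP0def, Fin.ext_iff]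
          rw [hxother _ hne1 hne2]
          by_cases hm0 : m = 0
          · have hPeq : (⟨m, by omega⟩ : Fin n) = P0 := by simp [hP0def, Fin.ext_iff]; omega
            rw [hPeq, hxP0]
            have : y (⟨m+1, hm⟩ : Fin n) ≤ y P0 := hA (by simp [hP0def, Fin.le_def])
            linarith
          · have hne3 : (⟨m, by omega⟩ : Fin n) ≠ Q := by simp [hQdef, Fin.ext_iff]; omega
            have hne4 : (⟨m, by omega⟩ : Fin n) ≠ P0 := by simp [hP0def, Fin.ext_iff]; omega
            rw [hxother _ hne3 hne4]
            exact hA (by simp [Fin.le_def])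
    · -- nonneg
      intro j
      rw [hxval]
      split_ifs with h1 h2
      · have : 0 ≤ y Q1 := hNN Q1
        simp [hgapdef] at hεgap
        linarith
      · linarith
      · exact hNN j
    · -- sum
      rw [hxpdef, sum_update, sum_update]
      rw [Function.update_of_ne (Ne.symm hP0Q)]
      rw [hy.2.2.1]; ring
    · -- constraints
      intro i hi1 hi2
      rcases le_or_gt i q with hiq | hiq
      · -- i ≤ q : use slack
        have hcongr : prodHead xp i = prodHead (Function.update y P0 (y P0 + ε)) i := by
          apply PH_congr
          intro j hj
          rw [hxpdef, Function.update_of_ne]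
          intro hcon
          rw [hcon] at hj
          simp [hQdef] at hj
          omega
        obtain ⟨R, hR1, hR2, hR3⟩ := PH_one_update y P0 i (by simp [hP0def]; omega)
        have hRnn : 0 ≤ R := hR3 hNN
        have hST : sumTail xp i = sumTail y i - ε := by
          rw [hxpdef, ST_update_ge _ _ _ _ (by simp [hQdef]; omega),
            ST_update_lt _ _ _ _ (by simp [hP0def]; omega),
            Function.update_of_ne (Ne.symm hP0Q)]
          ring
        rw [hcongr, hR1 _, hST]
        -- use the bound
        have hεbd := hεB i hi1 hiq
        have hRid : prodHead y i / y P0 = R := by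
          rw [hR2]; field_simp
        have hεbd' : ε * ((g:ℝ) + R) ≤ (g:ℝ) * sumTail y i - prodHead y i := by
          rw [hbounddef] at hεbd
          simp only at hεbd
          rw [hRid] at hεbd
          have hden : (0:ℝ) < (g:ℝ) + R := by positivity
          rw [le_div_iff₀ hden] at hεbd
          linarith
        rw [hR2] at hεbd'
        nlinarith [hεbd']
      · -- q < i : products decrease, tails unchanged
        obtain ⟨R, hR1, hR2, hR3, hR4⟩ := PH_two_update y P0 Q hP0Q i (by simp [hP0def]; omega) (by simp [hQdef]; omega)
        have hRnn : 0 ≤ R := hR3 hNN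
        have hST : sumTail xp i = sumTail y i := by
          rw [hxpdef, ST_update_lt _ _ _ _ (by simp [hQdef]; omega),
            ST_update_lt _ _ _ _ (by simp [hP0def]; omega)]
        have hple : prodHead xp i ≤ prodHead y i := by
          rw [hxpdef, hR1, hR2]
          have : (y P0 + ε) * (y Q - ε) ≤ y P0 * y Q := by nlinarith
          nlinarith
        rw [hST]
        calc prodHead xp i ≤ prodHead y i := hple
          _ ≤ (g:ℝ) * sumTail y i := hC' i hi1 hi2
  -- the strict decrease of the objective
  obtain ⟨R, hR1, hR2, hR3, hR4⟩ := PH_two_update y P0 Q hP0Q k (by simp [hP0def]; omega) (by simp [hQdef]; omega)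
  have hRpos : 0 < R := hR4 hpos
  have hlt : prodHead xp k < prodHead y k := by
    rw [hxpdef, hR1, hR2]
    have : (y P0 + ε) * (y Q - ε) < y P0 * y Q := by nlinarith
    nlinarith
  exact absurd (hmin xp hxmem) (by linarith)

end S18
end MOVE

section SLIDE
open Finset
namespace S18
variable {n : ℕ}

lemma twoblock_PH (j : ℕ) (c d : ℝ) (i : ℕ) (hi : i ≤ n) :
    prodHead (fun t : Fin n => if t.val < j then c else d) i = c ^ (min j i) * d ^ (i - j) := by
  unfold prodHead
  rw [Finset.prod_ite]
  rw [Finset.prod_const, Finset.prod_const]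
  congr 1
  · congr 1
    have : ((univ.filter (fun t : Fin n => t.val < i)).filter (fun t : Fin n => t.val < j))
        = univ.filter (fun t : Fin n => t.val < min j i) := by
      ext t; simp; omega
    rw [this, card_lt]; omega
  · congr 1
    have : ((univ.filter (fun t : Fin n => t.val < i)).filter (fun t : Fin n => ¬ t.val < j))
        = univ.filter (fun t : Fin n => j ≤ t.val ∧ t.val < i) := by
      ext t; simp; omega
    rw [this, cardIco]; omega

lemma twoblock_ST (j : ℕ) (c d : ℝ) (i : ℕ) (hj : j ≤ n) :
    sumTail (fun t : Fin n => if t.val < j then c else d) i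
      = ((j - i : ℕ) : ℝ) * c + ((n - max j i : ℕ) : ℝ) * d := by
  unfold sumTail
  rw [Finset.sum_ite]
  rw [Finset.sum_const, Finset.sum_const]
  have h1 : ((univ.filter (fun t : Fin n => i ≤ t.val)).filter (fun t : Fin n => t.val < j))
      = univ.filter (fun t : Fin n => i ≤ t.val ∧ t.val < j) := by
    ext t; simp; try tauto
  have h2 : ((univ.filter (fun t : Fin n => i ≤ t.val)).filter (fun t : Fin n => ¬ t.val < j))
      = univ.filter (fun t : Fin n => max j i ≤ t.val) := by
    ext t; simp; omega
  rw [h1, h2, cardIco, card_ge, nsmul_eq_mul, nsmul_eq_mul]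
  have e1 : min j n - min i n = j - i := by omega
  have e2 : n - min (max j i) n = n - max j i := by omega
  rw [e1, e2]

set_option maxHeartbeats 1000000 in
lemma slide {g k j : ℕ} {v w : ℝ} {y : Fin n → ℝ} (hg : 1 ≤ g) (hk : k ≤ n)
    (hy : y ∈ Agn g n) (hmin : ∀ x ∈ Agn g n, prodHead y k ≤ prodHead x k)
    (hj1 : 1 ≤ j) (hjk : j + 1 ≤ k)
    (hyform : y = fun t : Fin n => if t.val < j then v else w)
    (hvw : w < v) (hw : 0 < w)
    (hslack : ∀ i, 1 ≤ i → i ≤ n - 1 → prodHead y i < (g:ℝ) * sumTail y i) : False := by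
  classical
  have hjn : j < n := by omega
  have hn2 : 2 ≤ n := by omega
  set A : ℝ := ((n - j : ℕ) : ℝ) with hAdef
  set Bc : ℝ := (j : ℝ) with hBdef
  have hA1 : (1:ℝ) ≤ A := by
    rw [hAdef]
    have : 1 ≤ n - j := by omega
    exact_mod_cast this
  have hB1 : (1:ℝ) ≤ Bc := by
    rw [hBdef]; exact_mod_cast hj1
  -- the perturbed family
  set z : ℝ → Fin n → ℝ := fun s => fun t : Fin n => if t.val < j then v + A * s else w - Bc * s
    with hzdef
  have hz0 : z 0 = y := by
    funext t
    rw [hzdef, hyform]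
    simp
  -- eventually in 𝓝 0, z s ∈ Agn g n
  have hcont : ∀ t : Fin n, Continuous (fun s => z s t) := by
    intro t
    rw [hzdef]
    simp only
    split_ifs
    · continuity
    · continuity
  have hev : ∀ᶠ s in nhds (0:ℝ), z s ∈ Agn g n := by
    have hev1 : ∀ᶠ s in nhds (0:ℝ), |s| < (v - w) / (2 * (A + Bc)) := by
      have hd : 0 < (v - w) / (2 * (A + Bc)) := by
        apply div_pos (by linarith) (by linarith)
      filter_upwards [Metric.ball_mem_nhds (0:ℝ) hd] with s hs
      simpa [Real.dist_eq] using hs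
    have hev2 : ∀ᶠ s in nhds (0:ℝ), |s| < w / (2 * Bc) := by
      have hd : 0 < w / (2 * Bc) := by apply div_pos hw (by linarith)
      filter_upwards [Metric.ball_mem_nhds (0:ℝ) hd] with s hs
      simpa [Real.dist_eq] using hs
    have hev3 : ∀ i ∈ Finset.Icc 1 (n-1), ∀ᶠ s in nhds (0:ℝ),
        prodHead (z s) i < (g:ℝ) * sumTail (z s) i := by
      intro i hi
      simp at hi
      have hcp : Continuous (fun s => prodHead (z s) i) := by
        unfold prodHead
        apply continuous_finset_prod
        intro t _
        exact hcont t
      have hcs : Continuous (fun s => (g:ℝ) * sumTail (z s) i) := by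
        apply Continuous.mul continuous_const
        unfold sumTail
        apply continuous_finset_sum
        intro t _
        exact hcont t
      have h0 : prodHead (z 0) i < (g:ℝ) * sumTail (z 0) i := by
        rw [hz0]; exact hslack i hi.1 hi.2
      have := ContinuousAt.eventually_lt (hcp.continuousAt) (hcs.continuousAt) h0
      exact this
    rw [← Finset.eventually_all] at hev3
    filter_upwards [hev1, hev2, hev3] with s hs1 hs2 hs3
    have hABpos : 0 < A + Bc := by linarith
    have horder : w - Bc * s < v + A * s := by
      have h1 : |A * s + Bc * s| ≤ (A + Bc) * |s| := by
        rw [← add_mul, abs_mul]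
        apply mul_le_mul_of_nonneg_right _ (abs_nonneg s)
        rw [abs_of_pos hABpos]
      have h2 : (A + Bc) * |s| < (v - w) / 2 := by
        calc (A + Bc) * |s| < (A + Bc) * ((v - w) / (2 * (A + Bc))) := by
              apply mul_lt_mul_of_pos_left hs1 hABpos
          _ = (v - w) / 2 := by field_simp
      have h3 : -(A * s + Bc * s) ≤ (A + Bc) * |s| := by
        calc -(A * s + Bc * s) ≤ |A * s + Bc * s| := neg_le_abs _
          _ ≤ (A + Bc) * |s| := h1
      nlinarith [h3, h2]
    have hwpos : 0 < w - Bc * s := by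
      have h1 : Bc * s ≤ Bc * |s| := by
        apply mul_le_mul_of_nonneg_left (le_abs_self s) (by linarith)
      have h2 : Bc * |s| < w / 2 := by
        calc Bc * |s| < Bc * (w / (2 * Bc)) := by
              apply mul_lt_mul_of_pos_left hs2 (by linarith)
          _ = w / 2 := by field_simp
      nlinarith
    refine ⟨?_, ?_, ?_, ?_⟩
    · -- antitone
      apply antitone_of_adjacent
      intro m hm
      rw [hzdef]
      simp only
      rcases Nat.lt_or_ge (m+1) j with h1 | h1
      · rw [if_pos h1, if_pos (by omega)]
      · rw [if_neg (by omega)]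
        rcases Nat.lt_or_ge m j with h2 | h2
        · rw [if_pos h2]; linarith
        · rw [if_neg (by omega)]
    · -- nonneg
      intro t
      rw [hzdef]
      simp only
      split_ifs
      · linarith
      · linarith
    · -- sum
      have h2 : sumTail y 0 = 1 / (g:ℝ) := by rw [ST_zero]; exact hy.2.2.1
      rw [hyform, twoblock_ST j v w 0 (by omega)] at h2
      rw [← ST_zero, hzdef, twoblock_ST j _ _ 0 (by omega)]
      have e2 : (n - max j 0) = n - j := by simp
      have e3 : j - 0 = j := by simp
      rw [e2, e3] at h2 ⊢
      rw [hAdef, hBdef] at *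
      push_cast at h2 ⊢
      linear_combination h2
    · -- constraints
      intro i hi1 hi2
      exact le_of_lt (hs3 i (by simp; omega))
  -- extract an explicit ball
  rw [Metric.eventually_nhds_iff] at hev
  obtain ⟨δ, hδpos, hδ⟩ := hev
  set s0 : ℝ := δ / 2 with hs0def
  have hs0pos : 0 < s0 := by rw [hs0def]; linarith
  have hmem1 : z s0 ∈ Agn g n := hδ (by
    rw [Real.dist_eq, sub_zero, abs_of_pos hs0pos, hs0def]; linarith)
  have hmem2 : z (-s0) ∈ Agn g n := hδ (by
    rw [Real.dist_eq, sub_zero, abs_neg, abs_of_pos hs0pos, hs0def]; linarith)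
  -- objective values
  have hminj : min j k = j := by omega
  have hPy : prodHead y k = v ^ j * w ^ (k - j) := by
    rw [hyform, twoblock_PH j v w k hk, hminj]
  have hP1 : prodHead (z s0) k = (v + A * s0) ^ j * (w - Bc * s0) ^ (k - j) := by
    rw [hzdef]; rw [twoblock_PH j _ _ k hk, hminj]
  have hP2 : prodHead (z (-s0)) k = (v - A * s0) ^ j * (w + Bc * s0) ^ (k - j) := by
    rw [hzdef]; rw [twoblock_PH j _ _ k hk, hminj]
    ring_nf
  -- coordinates of the perturbed points are positive
  have hc1 : 0 < v + A * s0 := by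
    have := pos_of_mem hg hmem1 ⟨0, by omega⟩
    rw [hzdef] at this
    simpa [if_pos (by omega : (0:ℕ) < j)] using this
  have hc2 : 0 < w - Bc * s0 := by
    have := pos_of_mem hg hmem1 ⟨n-1, by omega⟩
    rw [hzdef] at this
    simpa [if_neg (by omega : ¬ (n-1 < j))] using this
  have hc3 : 0 < v - A * s0 := by
    have := pos_of_mem hg hmem2 ⟨0, by omega⟩
    rw [hzdef] at this
    simpa [if_pos (by omega : (0:ℕ) < j)] using this
  have hc4 : 0 < w + Bc * s0 := by
    have := pos_of_mem hg hmem2 ⟨n-1, by omega⟩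
    rw [hzdef] at this
    simpa [if_neg (by omega : ¬ (n-1 < j))] using this
  have hPypos : 0 < prodHead y k := PH_pos y k (pos_of_mem hg hy)
  have hm1 := hmin _ hmem1
  have hm2 := hmin _ hmem2
  -- multiply the two minimality inequalities
  have hsq : prodHead y k * prodHead y k ≤ prodHead (z s0) k * prodHead (z (-s0)) k := by
    apply mul_le_mul hm1 hm2 (le_of_lt hPypos)
    linarith [hm1, hPypos]
  have hprod : prodHead (z s0) k * prodHead (z (-s0)) k
      = (v^2 - (A*s0)^2) ^ j * (w^2 - (Bc*s0)^2) ^ (k - j) := by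
    rw [hP1, hP2]
    rw [show (v^2 - (A*s0)^2) = (v + A*s0) * (v - A*s0) by ring,
        show (w^2 - (Bc*s0)^2) = (w - Bc*s0) * (w + Bc*s0) by ring,
        mul_pow, mul_pow]
    ring
  have hlt : (v^2 - (A*s0)^2) ^ j * (w^2 - (Bc*s0)^2) ^ (k - j)
      < (v^2) ^ j * (w^2) ^ (k - j) := by
    have hkj1 : 1 ≤ k - j := by omega
    have h1 : (v^2 - (A*s0)^2) ^ j ≤ (v^2) ^ j := by
      apply pow_le_pow_left₀ (by nlinarith) (by nlinarith)
    have hbs : 0 < Bc * s0 := mul_pos (by linarith) hs0pos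
    have h2 : (w^2 - (Bc*s0)^2) ^ (k-j) < (w^2) ^ (k-j) := by
      apply pow_lt_pow_left₀ (by nlinarith [hbs]) (by nlinarith) (by omega)
    have h3 : 0 < (v^2 - (A*s0)^2) ^ j := pow_pos (by nlinarith) j
    have h4 : 0 < (w^2) ^ (k-j) := pow_pos (by nlinarith) _
    nlinarith [h1, h2, h3, h4, pow_pos (show (0:ℝ) < v^2 by nlinarith) j,
      pow_pos (show (0:ℝ) < w^2 - (Bc*s0)^2 by nlinarith) (k-j)]
  have hyk2 : prodHead y k * prodHead y k = (v^2)^j * (w^2)^(k-j) := by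
    rw [hPy]
    rw [show (v^2 : ℝ) = v * v by ring, show (w^2 : ℝ) = w * w by ring, mul_pow, mul_pow]
    ring
  rw [hprod] at hsq
  rw [hyk2] at hsq
  linarith

end S18
end SLIDE

section PEEL
open Finset
namespace S18

lemma PH_comp_succ {m : ℕ} (y : Fin (m+1) → ℝ) (l : ℕ) :
    prodHead y (l+1) = y 0 * prodHead (fun i : Fin m => y i.succ) l := by
  unfold prodHead
  rw [Finset.prod_filter, Finset.prod_filter]
  rw [Fin.prod_univ_succ]
  congr 1
  · simp

lemma ST_comp_succ {m : ℕ} (y : Fin (m+1) → ℝ) (l : ℕ) :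
    sumTail y (l+1) = sumTail (fun i : Fin m => y i.succ) l := by
  unfold sumTail
  rw [Finset.sum_filter, Finset.sum_filter]
  rw [Fin.sum_univ_succ]
  have h0 : (if l + 1 ≤ (0 : Fin (m+1)).val then y 0 else 0) = 0 := by simp
  rw [h0, zero_add]
  apply Finset.sum_congr rfl
  intro i _
  simp [Fin.val_succ, Nat.succ_le_succ_iff]

lemma sylv_ge_two {g : ℕ} (hg : 1 ≤ g) : ∀ m, 1 ≤ m → 2 ≤ sylv g m := by
  intro m hm
  induction m with
  | zero => omega
  | succ m ih =>
    rcases Nat.eq_zero_or_pos m with h | h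
    · subst h; show 2 ≤ sylv g 1; unfold sylv; omega
    · obtain ⟨m', rfl⟩ : ∃ m', m = m' + 1 := ⟨m - 1, by omega⟩
      have h2 := ih (by omega)
      show 2 ≤ sylv g (m' + 1) * (sylv g (m' + 1) - 1) + 1
      have h3 : 1 ≤ sylv g (m' + 1) - 1 := by omega
      have := Nat.mul_le_mul h2 h3
      omega

lemma sylv_shift {g : ℕ} (hg : 1 ≤ g) : ∀ m, 1 ≤ m → sylv (g * (g+1)) m = sylv g (m+1) := by
  intro m hm
  induction m with
  | zero => omega
  | succ m ih =>
    rcases Nat.eq_zero_or_pos m with h | h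
    · subst h
      show sylv (g*(g+1)) 1 = sylv g 2
      show g * (g+1) + 1 = sylv g 1 * (sylv g 1 - 1) + 1
      show g * (g+1) + 1 = (g+1) * ((g+1) - 1) + 1
      have : (g+1) - 1 = g := by omega
      rw [this]; ring
    · obtain ⟨m', rfl⟩ : ∃ m', m = m' + 1 := ⟨m - 1, by omega⟩
      have h2 := ih (by omega)
      show sylv (g*(g+1)) (m'+1) * (sylv (g*(g+1)) (m'+1) - 1) + 1
        = sylv g (m'+2) * (sylv g (m'+2) - 1) + 1
      rw [h2]

lemma tsylv_one (g : ℕ) : tsylv g 1 = g := by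
  unfold tsylv
  show sylv g 1 - 1 = g
  show (g + 1) - 1 = g
  omega

lemma tsylv_shift {g : ℕ} (hg : 1 ≤ g) (m : ℕ) (hm : 1 ≤ m) :
    tsylv (g * (g+1)) m = tsylv g (m+1) := by
  unfold tsylv
  rw [sylv_shift hg m hm]

/-- `y(g,n,1)` is the constant point -/
lemma ypt_one (g n : ℕ) (hn : 1 ≤ n) : ypt g n 1 = fun _ : Fin n => 1 / ((n:ℝ) * (g:ℝ)) := by
  funext i
  unfold ypt
  rw [if_neg (by omega)]
  rw [tsylv_one]
  have : n - 1 + 1 = n := by omega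
  rw [this]

lemma ypt_cons {g n' : ℕ} (hg : 1 ≤ g) (i : ℕ) (hi : 1 ≤ i) :
    (Fin.cons (1 / ((g:ℝ)+1)) (ypt (g*(g+1)) n' i) : Fin (n'+1) → ℝ) = ypt g (n'+1) (i+1) := by
  funext t
  refine Fin.cases ?_ ?_ t
  · rw [Fin.cons_zero]
    unfold ypt
    rw [if_pos (by simp; omega)]
    have : sylv g ((0:Fin (n'+1)).val + 1) = g + 1 := rfl
    rw [this]
    push_cast
    ring
  · intro s
    rw [Fin.cons_succ]
    unfold ypt
    have hcond : (s.val + 1 ≤ i - 1) = ((s.succ.val + 1 ≤ (i+1) - 1)) := by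
      simp [Fin.val_succ]; constructor <;> intro <;> omega
    by_cases h : s.val + 1 ≤ i - 1
    · rw [if_pos h, if_pos (by simp [Fin.val_succ]; omega)]
      rw [sylv_shift hg (s.val+1) (by omega)]
      simp [Fin.val_succ]
    · rw [if_neg h, if_neg (by simp [Fin.val_succ]; omega)]
      rw [tsylv_shift hg i hi]
      have : n' - i + 1 = (n' + 1) - (i + 1) + 1 := by omega
      rw [this]

/-- peeling off a tight first coordinate -/
lemma peel_mem {g n' : ℕ} {y : Fin (n'+1) → ℝ} (hg : 1 ≤ g)
    (hy : y ∈ Agn g (n'+1)) (h0 : y 0 = 1 / ((g:ℝ)+1)) :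
    (fun i : Fin n' => y i.succ) ∈ Agn (g*(g+1)) n' := by
  obtain ⟨hA, hNN, hS, hC⟩ := id hy
  have hgp := gpos hg
  refine ⟨?_, ?_, ?_, ?_⟩
  · intro a b hab
    exact hA (Fin.succ_le_succ_iff.mpr hab)
  · intro i; exact hNN _
  · have := Fin.sum_univ_succ y
    rw [hS, h0] at this
    have hgg : ((g*(g+1) : ℕ) : ℝ) = (g:ℝ) * ((g:ℝ)+1) := by push_cast; ring
    rw [hgg]
    have : ∑ i : Fin n', y i.succ = 1/(g:ℝ) - 1/((g:ℝ)+1) := by linarith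
    rw [this]
    field_simp; ring
  · intro m hm1 hm2
    have hc := hC (m+1) (by omega) (by omega)
    rw [PH_comp_succ y m, ST_comp_succ y m, h0] at hc
    have hgg : ((g*(g+1) : ℕ) : ℝ) = (g:ℝ) * ((g:ℝ)+1) := by push_cast; ring
    rw [hgg]
    have h2 : (0:ℝ) < (g:ℝ) + 1 := by linarith
    rw [div_mul_eq_mul_div, div_le_iff₀ h2] at hc
    calc prodHead (fun i : Fin n' => y i.succ) m
        ≤ (g:ℝ) * sumTail (fun i : Fin n' => y i.succ) m * ((g:ℝ)+1) := by linarith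
      _ = (g:ℝ) * ((g:ℝ)+1) * sumTail (fun i : Fin n' => y i.succ) m := by ring

/-- gluing a tight first coordinate on -/
lemma cons_mem {g n' : ℕ} {z : Fin n' → ℝ} (hg : 1 ≤ g)
    (hz : z ∈ Agn (g*(g+1)) n') :
    (Fin.cons (1 / ((g:ℝ)+1)) z : Fin (n'+1) → ℝ) ∈ Agn g (n'+1) := by
  obtain ⟨hA, hNN, hS, hC⟩ := id hz
  have hgp := gpos hg
  have hgg : ((g*(g+1) : ℕ) : ℝ) = (g:ℝ) * ((g:ℝ)+1) := by push_cast; ring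
  have hn'pos : 0 < n' := by
    by_contra h
    have hn0 : n' = 0 := by omega
    subst hn0
    have : (0:ℝ) < 1/((g*(g+1) : ℕ):ℝ) := by
      rw [hgg]; positivity
    rw [← hS] at this
    simp at this
  -- first coordinate of z is at most 1/(g+1)
  have hg' : 1 ≤ g * (g + 1) := by
    have := Nat.mul_le_mul hg (show 1 ≤ g + 1 by omega)
    simpa using this
  have hz0 : z ⟨0, hn'pos⟩ ≤ 1 / ((g:ℝ)+1) := by
    rcases Nat.lt_or_ge n' 2 with h | h
    · -- n' = 1
      have hn1 : n' = 1 := by omega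
      have hzv : z ⟨0, hn'pos⟩ = 1 / ((g*(g+1):ℕ):ℝ) := by
        rw [← hS]
        subst hn1
        rw [Fin.sum_univ_one]
        exact congrArg z (Fin.ext rfl)
      rw [hzv, hgg]
      have hg1 : (1:ℝ) ≤ (g:ℝ) := by exact_mod_cast hg
      rw [div_le_div_iff₀ (by positivity) (by linarith)]
      nlinarith [hg1]
    · have h1 := head_le hg' h hz
      have h2 : (1:ℝ) / (((g*(g+1):ℕ):ℝ) + 1) ≤ 1 / ((g:ℝ)+1) := by
        apply one_div_le_one_div_of_le (by linarith)
        rw [hgg]; nlinarith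
      exact le_trans h1 h2
  have hcs : (fun i : Fin n' => (Fin.cons (1 / ((g:ℝ)+1)) z : Fin (n'+1) → ℝ) i.succ) = z := by
    funext i; exact Fin.cons_succ _ _ _
  have hSz : sumTail z 0 = 1 / ((g*(g+1):ℕ):ℝ) := by rw [ST_zero]; exact hS
  refine ⟨?_, ?_, ?_, ?_⟩
  · apply antitone_of_adjacent
    intro m hm
    rcases Nat.eq_zero_or_pos m with h0 | h0
    · subst h0
      have e1 : (⟨1, hm⟩ : Fin (n'+1)) = Fin.succ ⟨0, hn'pos⟩ := rfl
      have e0 : (⟨0, by omega⟩ : Fin (n'+1)) = 0 := rfl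
      rw [e1, e0, Fin.cons_succ, Fin.cons_zero]
      exact le_trans (hA (show (⟨0, hn'pos⟩ : Fin n') ≤ ⟨0, hn'pos⟩ from le_rfl)) hz0
    · have e1 : (⟨m+1, hm⟩ : Fin (n'+1)) = Fin.succ ⟨m, by omega⟩ := rfl
      have e2 : (⟨m, by omega⟩ : Fin (n'+1)) = Fin.succ ⟨m-1, by omega⟩ := by
        apply Fin.ext; simp [Fin.val_succ]; try omega
      rw [e1, e2, Fin.cons_succ, Fin.cons_succ]
      exact hA (by simp [Fin.le_def]; try omega)
  · intro i
    refine Fin.cases ?_ ?_ i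
    · rw [Fin.cons_zero]; positivity
    · intro s; rw [Fin.cons_succ]; exact hNN s
  · rw [Fin.sum_univ_succ, Fin.cons_zero]
    have : ∑ i : Fin n', (Fin.cons (1 / ((g:ℝ)+1)) z : Fin (n'+1) → ℝ) i.succ = 1 / ((g*(g+1):ℕ):ℝ) := by
      rw [hcs] at *
      exact hS
    rw [this, hgg]
    field_simp
    try ring
  · intro m hm1 hm2
    obtain ⟨l, rfl⟩ : ∃ l, m = l + 1 := ⟨m - 1, by omega⟩
    rw [PH_comp_succ _ l, ST_comp_succ _ l, hcs, Fin.cons_zero]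
    rcases Nat.eq_zero_or_pos l with h0 | h0
    · subst h0
      rw [PH_zero, ST_zero, hS, hgg, mul_one]
      rw [div_le_iff₀ (by positivity)]
      field_simp; norm_num
    · have hc := hC l h0 (by omega)
      rw [hgg] at hc
      have hnn := ST_nonneg (fun i : Fin n' => z i) l (fun i => hNN i)
      calc 1 / ((g:ℝ)+1) * prodHead z l
          ≤ 1 / ((g:ℝ)+1) * ((g:ℝ) * ((g:ℝ)+1) * sumTail z l) := by
            apply mul_le_mul_of_nonneg_left hc (by positivity)
        _ = (g:ℝ) * sumTail z l := by field_simp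
end S18
end PEEL

section HELP
open Finset
namespace S18
variable {n : ℕ}

lemma gg1 {g : ℕ} (hg : 1 ≤ g) : 1 ≤ g * (g + 1) := by
  have := Nat.mul_le_mul hg (show 1 ≤ g + 1 by omega)
  simpa using this

lemma PH_const_prefix {y : Fin n → ℝ} (l : ℕ) (hl : l ≤ n) (c : ℝ)
    (hcst : ∀ i : Fin n, i.val < l → y i = c) : prodHead y l = c ^ l := by
  unfold prodHead
  rw [Finset.prod_congr rfl (fun i hi => hcst i (by simpa using hi)), Finset.prod_const, card_lt]
  congr 1
  omega

lemma const_of_head_avg {y : Fin n → ℝ} (h0 : 0 < n) (hA : Antitone y)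
    (heq : ∑ i, y i = (n:ℝ) * y ⟨0, h0⟩) : ∀ i, y i = y ⟨0, h0⟩ := by
  intro i
  have hsum0 : ∑ j : Fin n, (y ⟨0, h0⟩ - y j) = 0 := by
    rw [Finset.sum_sub_distrib, Finset.sum_const, card_univ, heq]
    simp [nsmul_eq_mul]
  have hterm : ∀ j ∈ (univ : Finset (Fin n)), 0 ≤ y ⟨0, h0⟩ - y j := by
    intro j _
    have := hA (show (⟨0, h0⟩ : Fin n) ≤ j by simp [Fin.le_def])
    linarith
  have := (Finset.sum_eq_zero_iff_of_nonneg hterm).mp hsum0 i (Finset.mem_univ i)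
  linarith

lemma const_is_ypt1 {g : ℕ} {y : Fin n → ℝ} (hg : 1 ≤ g) (h0 : 0 < n)
    (hy : y ∈ Agn g n) (hc : ∀ i, y i = y ⟨0, h0⟩) : y = ypt g n 1 := by
  have hgp := gpos hg
  have hnp : (0:ℝ) < (n:ℝ) := by exact_mod_cast h0
  have hsum : ∑ i, y i = (n:ℝ) * y ⟨0, h0⟩ := by
    rw [Finset.sum_congr rfl (fun i _ => hc i), Finset.sum_const, card_univ]
    simp [nsmul_eq_mul]
  have hS := hy.2.2.1
  rw [hsum] at hS
  have hy0 : y ⟨0, h0⟩ = 1/((n:ℝ)*(g:ℝ)) := by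
    rw [eq_div_iff (by positivity)]
    have hgg1 : (g:ℝ) * (1/(g:ℝ)) = 1 := by field_simp
    nlinarith [hS]
  rw [ypt_one g n (by omega)]
  funext i
  rw [hc i, hy0]

end S18
end HELP

section MASTER
open Finset
namespace S18

set_option maxHeartbeats 2000000 in
lemma master : ∀ k g n : ℕ, 1 ≤ g → 1 ≤ k → k ≤ n →
    ∀ y ∈ Agn g n, (∀ x ∈ Agn g n, prodHead y k ≤ prodHead x k) →
    ∃ i₀, 1 ≤ i₀ ∧ i₀ ≤ k ∧ y = ypt g n i₀ := by
  intro k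
  induction k with
  | zero => intro g n _ h; omega
  | succ k ih =>
    intro g n hg _ hkn y hy hmin
    classical
    have h0n : 0 < n := by omega
    have hpos := pos_of_mem hg hy
    obtain ⟨hA, hNN, hS, hC⟩ := id hy
    rcases Nat.eq_zero_or_pos k with hk0 | hk0
    · -- base case k+1 = 1
      subst hk0
      have hconst := tailconst (k := 1) hg le_rfl hkn hy hmin
      refine ⟨1, le_rfl, le_rfl, const_is_ypt1 hg h0n hy ?_⟩
      intro i
      have := hconst i (by omega)
      simpa using this
    · -- k ≥ 1, so k+1 ≥ 2 and n ≥ 2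
      have hn2 : 2 ≤ n := by omega
      have hc1 := hC 1 le_rfl (by omega)
      have hP1 : prodHead y 1 = y ⟨0, h0n⟩ := PH_one y h0n
      have hT1 : sumTail y 1 = 1/(g:ℝ) - y ⟨0, h0n⟩ := by
        have h1 := ST_succ y 0 h0n
        rw [ST_zero, hS] at h1
        have he : y (⟨0, h0n⟩ : Fin n) = y ⟨0, by omega⟩ := rfl
        rw [← he] at h1
        linarith
      rcases lt_or_eq_of_le hc1 with hslack1 | htight1
      · -- SLACK case  (C₁ strict)
        rw [hP1, hT1] at hslack1
        by_cases hconst : ∀ i : Fin n, y i = y ⟨0, h0n⟩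
        · exact ⟨1, le_rfl, by omega, const_is_ypt1 hg h0n hy hconst⟩
        · exfalso
          -- first strict drop
          have hEx : ∃ m : ℕ, ∃ hm : m+1 < n, y ⟨m+1, hm⟩ < y ⟨m, Nat.lt_of_succ_lt hm⟩ := by
            by_contra hno
            push_neg at hno
            apply hconst
            exact const_of_no_drop y h0n hA (fun m hm => not_lt.mpr (hno m hm))
          set jm := Nat.find hEx with hjmdef
          obtain ⟨hjmn, hjmdrop⟩ := Nat.find_spec hEx
          have hprefix : ∀ m : ℕ, m ≤ jm → ∀ hm : m < n, y ⟨m, hm⟩ = y ⟨0, h0n⟩ := by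
            intro m hmle hm
            have := eq_on_no_drop y hA 0 m (by omega) hm (fun l _ hl1 hl2 => by
              intro hcon
              exact (Nat.find_min hEx (show l < jm by omega)) ⟨hl2, hcon⟩)
            rw [this]
          rcases le_or_gt (k+1) jm.succ with hcaseA | hcaseB
          · -- case A : the first k+1 coordinates are all equal; all-equal point wins
            obtain ⟨hmem, hPHlow, hPHhigh⟩ := flat_spec hg hy 0 (by omega)
            have hky : k ≤ jm := by omega
            set u : ℝ := sumTail y 0 / ((n - 0 : ℕ) : ℝ) with hudef
            have hu2 : u = (1/(g:ℝ)) / (n:ℝ) := by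
              rw [hudef, ST_zero, hS]
              norm_num
            have hflatk : prodHead (flat y 0) (k+1) = u ^ (k+1) := by
              rw [hPHhigh (k+1) (by omega) (by omega), PH_zero, one_mul]
              norm_num
            have hyk : prodHead y (k+1) = (y ⟨0, h0n⟩) ^ (k+1) := by
              apply PH_const_prefix (k+1) (by omega)
              intro i hi
              have he : y i = y ⟨i.val, i.isLt⟩ := congrArg y (Fin.ext rfl)
              rw [he]
              exact hprefix i.val (by omega) i.isLt
            have hcmp := hmin _ hmem
            rw [hyk, hflatk] at hcmp
            have hunn : 0 ≤ u := by
              rw [hu2]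
              have := gpos hg
              positivity
            have hle1 : y ⟨0, h0n⟩ ≤ u := by
              apply le_of_pow_le_pow_left₀ (by omega) hunn hcmp
            have hle2 : u ≤ y ⟨0, h0n⟩ := by
              have hbd : sumTail y 0 ≤ ((univ : Finset (Fin n)).filter (fun j => 0 ≤ j.val)).card • y ⟨0, h0n⟩ := by
                apply Finset.sum_le_card_nsmul
                intro i hi
                exact hA (by simp [Fin.le_def])
              rw [card_ge] at hbd
              have hm0 : n - min 0 n = n := by omega
              rw [hm0, nsmul_eq_mul] at hbd
              rw [hudef]
              have hn0 : ((n - 0 : ℕ):ℝ) = (n:ℝ) := by norm_num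
              rw [hn0, div_le_iff₀ (by exact_mod_cast h0n)]
              calc sumTail y 0 ≤ (n:ℝ) * y ⟨0, h0n⟩ := hbd
                _ = y ⟨0, h0n⟩ * (n:ℝ) := by ring
            have heqq : y ⟨0, h0n⟩ = u := le_antisymm hle1 hle2
            apply hconst
            apply const_of_head_avg h0n hA
            rw [ST_zero] at hudef
            have : (0:ℝ) < (n:ℝ) := by exact_mod_cast h0n
            rw [heqq, hudef]
            have hn0 : ((n - 0 : ℕ):ℝ) = (n:ℝ) := by norm_num
            rw [hn0]
            field_simp
          · -- case B : first drop within the first k coordinates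
            have hjmk : jm < k := by omega
            by_cases htight : ∃ i, 1 ≤ i ∧ i ≤ jm + 1 ∧ prodHead y i = (g:ℝ) * sumTail y i
            · -- B-tight : tight constraint must sit exactly at jm+1, all earlier slack
              have hilt : ∀ i', 1 ≤ i' → i' ≤ jm → prodHead y i' < (g:ℝ) * sumTail y i' := by
                intro i' h1 h2
                obtain ⟨l, rfl⟩ : ∃ l, i' = l + 1 := ⟨i' - 1, by omega⟩
                apply slack_of_eq hg hy l (by omega)
                have e1 : y (⟨l+1, by omega⟩ : Fin n) = y ⟨0, h0n⟩ := hprefix (l+1) (by omega) (by omega)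
                have e2 : y (⟨l, by omega⟩ : Fin n) = y ⟨0, h0n⟩ := hprefix l (by omega) (by omega)
                rw [e1, e2]
              obtain ⟨i, hi1, hi2, hieq⟩ := htight
              have hi3 : i = jm + 1 := by
                by_contra hne
                have := hilt i hi1 (by omega)
                rw [hieq] at this
                exact lt_irrefl _ this
              have hjm1 : 1 ≤ jm := by
                by_contra hjm0
                have hjm00 : jm = 0 := by omega
                rw [hi3, hjm00] at hieq
                rw [hP1, hT1] at hieq
                exact absurd hieq (ne_of_lt hslack1)
              exact move hg (show k+1 ≤ n from hkn) hy hmin jm hjm1 (by omega) hjmn hjmdrop hilt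
            · -- B-slack : no tight constraint among the first jm+1
              push_neg at htight
              have hslackpre : ∀ i, 1 ≤ i → i ≤ jm + 1 → prodHead y i < (g:ℝ) * sumTail y i := by
                intro i h1 h2
                rcases lt_or_eq_of_le (hC i h1 (by omega)) with h | h
                · exact h
                · exact absurd h (htight i h1 h2)
              by_cases hEx2 : ∃ m : ℕ, ∃ hm : m+1 < n, jm + 1 ≤ m ∧ y ⟨m+1, hm⟩ < y ⟨m, Nat.lt_of_succ_lt hm⟩
              · -- a second strict drop at cm
                set cm := Nat.find hEx2 with hcmdef
                obtain ⟨hcmn, hcmge, hcmdrop⟩ := Nat.find_spec hEx2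
                have hblock : ∀ m : ℕ, jm + 1 ≤ m → m ≤ cm → ∀ hm : m < n,
                    y ⟨m, hm⟩ = y ⟨jm+1, hjmn⟩ := by
                  intro m hm1 hm2 hm
                  exact eq_on_no_drop y hA (jm+1) m hm1 hm (fun l hl0 hl1 hl2 => by
                    intro hcon
                    exact (Nat.find_min hEx2 (show l < cm by omega)) ⟨hl2, hl0, hcon⟩)
                have htc := tailconst (k := k+1) hg (by omega) hkn hy hmin
                have hcmk : cm + 1 ≤ k := by
                  by_contra hgt
                  have hkcm : k ≤ cm := by omega
                  have h1 : y ⟨cm+1, hcmn⟩ = y ⟨(k+1)-1, by omega⟩ := htc _ (by simp; omega)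
                  have h2 : y ⟨cm, by omega⟩ = y ⟨(k+1)-1, by omega⟩ := htc _ (by simp; omega)
                  rw [h1, h2] at hcmdrop
                  exact lt_irrefl _ hcmdrop
                have hslackcm : ∀ i, 1 ≤ i → i ≤ cm → prodHead y i < (g:ℝ) * sumTail y i := by
                  intro i h1 h2
                  rcases le_or_gt i (jm+1) with h | h
                  · exact hslackpre i h1 h
                  · obtain ⟨l, rfl⟩ : ∃ l, i = l + 1 := ⟨i - 1, by omega⟩
                    apply slack_of_eq hg hy l (by omega)
                    have e1 : y (⟨l+1, by omega⟩ : Fin n) = y ⟨jm+1, hjmn⟩ :=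
                      hblock (l+1) (by omega) (by omega) (by omega)
                    have e2 : y (⟨l, by omega⟩ : Fin n) = y ⟨jm+1, hjmn⟩ :=
                      hblock l (by omega) (by omega) (by omega)
                    rw [e1, e2]
                exact move hg (show k+1 ≤ n from hkn) hy hmin cm (by omega) (by omega) hcmn hcmdrop hslackcm
              · -- two-block structure: slide
                push_neg at hEx2
                set v : ℝ := y ⟨0, h0n⟩ with hvdef
                set w : ℝ := y ⟨jm+1, hjmn⟩ with hwdef
                have hyform : y = fun t : Fin n => if t.val < jm + 1 then v else w := by
                  funext t
                  by_cases ht : t.val < jm + 1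
                  · rw [if_pos ht, hvdef]
                    have he : y t = y ⟨t.val, t.isLt⟩ := congrArg y (Fin.ext rfl)
                    rw [he]
                    exact hprefix t.val (by omega) t.isLt
                  · rw [if_neg ht, hwdef]
                    have he : y t = y ⟨t.val, t.isLt⟩ := congrArg y (Fin.ext rfl)
                    rw [he]
                    have := eq_on_no_drop y hA (jm+1) t.val (by omega) t.isLt (fun l hl0 hl1 hl2 => by
                      intro hcon
                      exact absurd hcon (not_lt.mpr (hEx2 l hl2 hl0)))
                    rw [this]
                have hvw : w < v := by
                  rw [hvdef, hwdef]
                  have := hprefix jm (le_refl jm) (by omega)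
                  calc y ⟨jm+1, hjmn⟩ < y ⟨jm, by omega⟩ := hjmdrop
                    _ = y ⟨0, h0n⟩ := this
                have hwpos : 0 < w := hpos _
                have hvlt1 : v < 1 := coord_lt_one hg hn2 hy _
                have hwlt1 : w < 1 := coord_lt_one hg hn2 hy _
                have hslackall : ∀ i, 1 ≤ i → i ≤ n - 1 → prodHead y i < (g:ℝ) * sumTail y i := by
                  intro i h1 h2
                  rcases le_or_gt i (jm+1) with h | h
                  · exact hslackpre i h1 h
                  · rcases le_or_gt (i+1) (n-1) with h' | h'
                    · obtain ⟨l, rfl⟩ : ∃ l, i = l + 1 := ⟨i - 1, by omega⟩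
                      apply slack_of_eq hg hy l (by omega)
                      have e1 := congrFun hyform (⟨l+1, by omega⟩ : Fin n)
                      have e2 := congrFun hyform (⟨l, by omega⟩ : Fin n)
                      rw [if_neg (by simp; omega)] at e1
                      rw [if_neg (by simp; omega)] at e2
                      rw [e1, e2]
                    · -- i = n-1 : direct computation at the two-block point
                      have hin : i = n - 1 := by omega
                      rw [hyform, twoblock_PH (jm+1) v w i (by omega),
                        twoblock_ST (jm+1) v w i (by omega)]
                      have hm1 : min (jm+1) i = jm + 1 := by omega
                      have hm2 : (jm + 1 - i : ℕ) = 0 := by omega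
                      have hm3 : (n - max (jm+1) i : ℕ) = 1 := by omega
                      rw [hm1, hm2, hm3]
                      push_cast
                      have hvp : 0 < v := hpos _
                      have he1 : v ^ (jm+1) ≤ v := by
                        calc v ^ (jm+1) ≤ v ^ 1 := by
                              apply pow_le_pow_of_le_one (le_of_lt hvp) (le_of_lt hvlt1) (by omega)
                          _ = v := pow_one v
                      have he2 : w ^ (i - (jm+1)) ≤ w := by
                        calc w ^ (i - (jm+1)) ≤ w ^ 1 := by
                              apply pow_le_pow_of_le_one (le_of_lt hwpos) (le_of_lt hwlt1) (by omega)
                          _ = w := pow_one w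
                      have hgR : (1:ℝ) ≤ (g:ℝ) := by exact_mod_cast hg
                      have hppos : 0 < w ^ (i - (jm+1)) := pow_pos hwpos _
                      nlinarith [he1, he2, hppos, hwpos, hvp]
                exact slide hg (show k+1 ≤ n from hkn) hy hmin (by omega : 1 ≤ jm + 1)
                  (by omega : (jm + 1) + 1 ≤ k + 1) hyform hvw hwpos hslackall
      · -- TIGHT case : peel off the first coordinate
        have hgp := gpos hg
        rw [hP1, hT1] at htight1
        have hy0 : y ⟨0, h0n⟩ = 1/((g:ℝ)+1) := by
          have hgg1 : (g:ℝ) * (1/(g:ℝ)) = 1 := by field_simp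
          rw [mul_sub, hgg1] at htight1
          rw [eq_div_iff (by linarith)]
          linear_combination htight1
        obtain ⟨n', rfl⟩ : ∃ n', n = n' + 1 := ⟨n - 1, by omega⟩
        have hy00 : y 0 = 1/((g:ℝ)+1) := hy0
        have hz := peel_mem hg hy hy00
        have hcpos : (0:ℝ) < 1/((g:ℝ)+1) := by positivity
        have hminz : ∀ z' ∈ Agn (g*(g+1)) n',
            prodHead (fun i : Fin n' => y i.succ) k ≤ prodHead z' k := by
          intro z' hz'
          have hx' := cons_mem hg hz'
          have h1 := hmin _ hx'
          rw [PH_comp_succ y k, PH_comp_succ _ k] at h1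
          have hcs : (fun i : Fin n' => (Fin.cons (1/((g:ℝ)+1)) z' : Fin (n'+1) → ℝ) i.succ) = z' := by
            funext i; exact Fin.cons_succ _ _ _
          rw [hy00, Fin.cons_zero, hcs] at h1
          exact le_of_mul_le_mul_left h1 hcpos
        obtain ⟨i', hi1, hi2, hzeq⟩ := ih (g*(g+1)) n' (gg1 hg) hk0 (by omega) _ hz hminz
        refine ⟨i' + 1, by omega, by omega, ?_⟩
        have hcons := ypt_cons (g := g) (n' := n') hg i' hi1
        rw [← hcons, ← hzeq]
        have : y = Fin.cons (y 0) (fun i : Fin n' => y i.succ) := by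
          funext t
          refine Fin.cases ?_ ?_ t
          · rw [Fin.cons_zero]
          · intro s; rw [Fin.cons_succ]
        rw [← hy00]
        exact this

end S18
end MASTER

end AUX

/-- Let `g ≥ 1`, `n ≥ 3` and `1 ≤ k ≤ n`. If `f_k(x) = x₁⋯x_k`
attains its minimum on `A_g^n` at `y`, then `y = y(g,n,i₀)` for some `i₀ ≤ k`. -/
theorem fk_minimizer_structure
    (g n k : ℕ) (hg : 1 ≤ g) (hn : 3 ≤ n) (hk1 : 1 ≤ k) (hk2 : k ≤ n)
    (y : Fin n → ℝ) (hy : y ∈ Agn g n)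
    (hmin : ∀ x ∈ Agn g n, prodHead y k ≤ prodHead x k) :
    ∃ i₀, 1 ≤ i₀ ∧ i₀ ≤ k ∧ y = ypt g n i₀ := by
  exact S18.master k g n hg hk1 hk2 y hy hmin
end
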